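/- arXiv:0805.0954 — 9 statements merged into one kernel-verified Lean document; each statement's English description precedes it below -/
import Mathlib

section
/- Let a = (a_1,…,a_p) be a primitive p-tuple and let λ ∈ ℤ_+^p satisfy λ_i ≥ max(a_1,…,a_p) for every i = 1,…,p. Then λ is saturated for a, i.e., M(a,λ) = {0,1,…,λ·a} \ (G(a) ∪ (λ·a − G(a))). -/
/-- The monoid generated by a tuple `a` of nonnegative integers:
all nonnegative integer combinations of its entries. -/
def tupleMonoid {ι : Type} [Fintype ι] (a : ι → ℕ) : Set ℕ :=
  {v | ∃ μ : ι → ℕ, v = ∑ i, μ i * a i}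

/-- The gap set `G(a) = ℤ₊ \ M(a)`. -/
def gapSet {ι : Type} [Fintype ι] (a : ι → ℕ) : Set ℕ :=
  {v | v ∉ tupleMonoid a}

/-- The restriction `M(a,λ) = {μ·a : μ ∈ ℤ₊^p, μ ≤ λ}`. -/
def restrictedMonoid {ι : Type} [Fintype ι] (a lam : ι → ℕ) : Set ℕ :=
  {v | ∃ μ : ι → ℕ, μ ≤ lam ∧ v = ∑ i, μ i * a i}

/-!
Let `m = a i₀` be the largest entry and `S = λ·a`. If `v ∈ M(a)` and `v ≤ λ_{i₀} m`, reducing the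
coefficients of a representation of `v` modulo `m` and moving the quotients onto `a i₀` gives
coefficients `< m ≤ λ_i` off `i₀`, hence within `λ`; the case `S - v ≤ λ_{i₀} m` follows by
`μ ↦ λ - μ`. In the remaining range `v` is at distance more than `λ_{i₀} m ≥ (m - 1)²` from both
ends of `[0, S]`. There the generators are added one at a time to `a i₀`: with `g` the gcd of the
entries used so far, every multiple of `g` at distance at least `reprMargin` from both ends of the
current capacity is representable. When `a x` is added, its coefficient is chosen in the residue
class modulo `g / gcd (a x) g` that makes the remainder a multiple of `g`, and the window is wide
enough for that residue class to put the remainder inside the previous window.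
-/

open Finset

namespace Nat

theorem exists_lt_mul_modEq {b n R : ℕ} (hn : n ≠ 0) (hR : gcd b n ∣ R) :
    ∃ ρ < n / gcd b n, b * ρ ≡ R [MOD n] := by
  have hg : 0 < gcd b n := gcd_pos_of_pos_right _ (pos_of_ne_zero hn)
  obtain ⟨R', rfl⟩ := hR
  obtain ⟨ρ, hρ, hmod⟩ := exists_mul_mod_eq_of_coprime R' (coprime_div_gcd_div_gcd hg)
    (Nat.div_pos (le_of_dvd (pos_of_ne_zero hn) (gcd_dvd_right b n)) hg).ne'
  refine ⟨ρ, hρ, ?_⟩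
  have := (show b / gcd b n * ρ ≡ R' [MOD n / gcd b n] from hmod).mul_left' (gcd b n)
  rwa [← mul_assoc, Nat.mul_div_cancel' (gcd_dvd_left _ _),
    Nat.mul_div_cancel' (gcd_dvd_right _ _)] at this

theorem exists_add_mul_mem_Icc {f d lo hi : ℕ} (K : ℕ) (hf : f ≤ hi) (hK : lo ≤ f + K * d)
    (hd : f < lo → lo + d ≤ hi + 1) : ∃ k ≤ K, f + k * d ∈ Set.Icc lo hi := by
  induction K with
  | zero => exact ⟨0, le_rfl, by simpa using hK, by simpa using hf⟩
  | succ K ih =>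
    by_cases h : lo ≤ f + K * d
    · obtain ⟨k, hk, hlo, hhi⟩ := ih h
      exact ⟨k, by omega, hlo, hhi⟩
    · refine ⟨K + 1, le_rfl, hK, ?_⟩
      have := hd (by omega)
      rw [add_one_mul]
      omega

theorem exists_dvd_sub_mul_mem_window {b n R lamx w C : ℕ} (hn : n ≠ 0) (hR : gcd b n ∣ R)
    (hr : n / gcd b n ≤ lamx) (hlow : w + (n / gcd b n - 1) * b ≤ R)
    (hhigh : R + w + (n / gcd b n - 1) * b ≤ C + lamx * b) (hgap : 2 * w + n / gcd b n * b ≤ C) :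
    ∃ c ≤ lamx, c * b ≤ R ∧ n ∣ R - c * b ∧ w ≤ R - c * b ∧ R - c * b + w ≤ C := by
  set r := n / gcd b n
  obtain ⟨ρ, hρr, hρ⟩ := exists_lt_mul_modEq hn hR
  have hρb : ρ * b ≤ (r - 1) * b := Nat.mul_le_mul_right _ (by omega)
  have hlast : lamx ≤ ρ + (lamx - ρ) / r * r + (r - 1) := by
    have := Nat.div_add_mod' (lamx - ρ) r
    have := Nat.mod_lt (lamx - ρ) (show 0 < r by omega)
    omega
  have hlastb : lamx * b ≤ ρ * b + (lamx - ρ) / r * (r * b) + (r - 1) * b := by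
    calc lamx * b ≤ (ρ + (lamx - ρ) / r * r + (r - 1)) * b := Nat.mul_le_mul_right _ hlast
      _ = _ := by ring
  obtain ⟨k, hk, hklo, hkhi⟩ := exists_add_mul_mem_Icc (f := ρ * b) (d := r * b)
    (lo := R + w - C) (hi := R - w) ((lamx - ρ) / r) (by omega) (by omega) (fun _ => by omega)
  have hc : (ρ + k * r) * b = ρ * b + k * (r * b) := by ring
  have hcl : ρ + k * r ≤ lamx := by
    have := Nat.div_mul_le_self (lamx - ρ) r
    have := Nat.mul_le_mul_right r hk
    omega
  refine ⟨ρ + k * r, hcl, by omega, ?_, by omega, by omega⟩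
  have hnr : n ∣ b * r := ⟨b / gcd b n, by
    rw [← Nat.mul_div_assoc _ (gcd_dvd_right b n), mul_comm n,
      Nat.div_mul_right_comm (gcd_dvd_left b n)]⟩
  refine (Nat.modEq_iff_dvd' (by omega)).1 ?_
  calc (ρ + k * r) * b = b * ρ + (b * k) * r := by ring
    _ ≡ b * ρ + 0 [MOD n] := Nat.ModEq.add_left _ (Nat.modEq_zero_iff_dvd.2 (by
      rw [mul_right_comm]; exact hnr.mul_right k))
    _ ≡ R [MOD n] := by simpa using hρ

theorem mul_sub_one_add_sub_one_mul_le {t t' b r q : ℕ} (ht : t' ≤ t) (hb : b ≤ t) (hr : 0 < r)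
    (hq : 0 < q) : t' * (q - 1) + (r - 1) * b ≤ t * (r * q - 1) := by
  obtain ⟨r, rfl⟩ := Nat.exists_eq_add_of_lt hr
  obtain ⟨q, rfl⟩ := Nat.exists_eq_add_of_lt hq
  simp only [zero_add, Nat.add_sub_cancel]
  have : (r + 1) * (q + 1) - 1 = q + r * (q + 1) := by
    rw [show (r + 1) * (q + 1) = q + r * (q + 1) + 1 by ring]; rfl
  rw [this, mul_add]
  have h1 : t' * q ≤ t * q := Nat.mul_le_mul_right q ht
  have h2 : r * b ≤ t * (r * (q + 1)) := by
    calc r * b ≤ r * t := Nat.mul_le_mul_left r hb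
      _ ≤ r * t * (q + 1) := Nat.le_mul_of_pos_right _ (by omega)
      _ = _ := by ring
  omega

theorem two_mul_mul_div_sub_one_add_mul_le {m D r b t : ℕ} (hDm : D ∣ m) (hrD : r ≤ D)
    (hb : b < m) (ht : t < m) (hDt : D ∣ t) : 2 * (t * (m / D - 1)) + r * b ≤ m * m + m * t := by
  obtain ⟨q, rfl⟩ := hDm
  have hD : 0 < D := Nat.pos_of_ne_zero (by rintro rfl; simp at hb)
  have hq : 0 < q := Nat.pos_of_ne_zero (by rintro rfl; simp at hb)
  rw [Nat.mul_div_cancel_left _ hD]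
  rcases Nat.eq_zero_or_pos t with rfl | htpos
  · have : r * b ≤ D * q * (D * q) :=
      Nat.mul_le_mul (hrD.trans (Nat.le_mul_of_pos_right D hq)) hb.le
    simpa using this
  have hDt' : D ≤ t := Nat.le_of_dvd htpos hDt
  rcases Nat.lt_or_ge D 2 with hD1 | hD2
  · obtain rfl : D = 1 := by omega
    obtain ⟨q, rfl⟩ := Nat.exists_eq_add_of_lt hq
    simp only [zero_add, Nat.add_sub_cancel] at *
    nlinarith
  · have h1 : 2 * (t * (q - 1)) ≤ t * (D * q) := by
      have : 2 * (q - 1) ≤ D * q := by nlinarith [Nat.sub_le q 1]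
      nlinarith
    nlinarith

end Nat

theorem Finset.dvd_sup_of_forall_dvd {ι : Type*} {s : Finset ι} {f : ι → ℕ} {d : ℕ}
    (h : ∀ i ∈ s, d ∣ f i) : d ∣ s.sup f :=
  Finset.sup_induction (dvd_zero d) (fun _ h₁ _ h₂ => sup_ind _ _ h₁ h₂) h

section Margin

variable {ι : Type*} [DecidableEq ι]

def reprMargin (a : ι → ℕ) (i₀ : ι) (s : Finset ι) : ℕ :=
  s.sup a * (a i₀ / (insert i₀ s).gcd a - 1)

theorem gcd_insert_insert (a : ι → ℕ) (i₀ x : ι) (s : Finset ι) :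
    (insert i₀ (insert x s)).gcd a = Nat.gcd (a x) ((insert i₀ s).gcd a) := by
  rw [Finset.insert_comm, gcd_insert]
  rfl

theorem reprMargin_add_le {a : ι → ℕ} {i₀ : ι} (hm : 0 < a i₀) (x : ι) (s : Finset ι) :
    reprMargin a i₀ s +
        ((insert i₀ s).gcd a / Nat.gcd (a x) ((insert i₀ s).gcd a) - 1) * a x ≤
      reprMargin a i₀ (insert x s) := by
  unfold reprMargin
  rw [gcd_insert_insert, sup_insert]
  set D := (insert i₀ s).gcd a
  obtain ⟨q, hq⟩ : D ∣ a i₀ := gcd_dvd (mem_insert_self _ _)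
  obtain ⟨r, hr⟩ := Nat.gcd_dvd_right (a x) D
  have hD : 0 < D := Nat.pos_of_dvd_of_pos ⟨q, hq⟩ hm
  have hg : 0 < Nat.gcd (a x) D := Nat.gcd_pos_of_pos_right _ hD
  generalize Nat.gcd (a x) D = g at hr hg ⊢
  have hmD : a i₀ / D = q := by rw [hq, Nat.mul_div_cancel_left _ hD]
  have hmg : a i₀ / g = r * q := by rw [hq, hr, mul_assoc, Nat.mul_div_cancel_left _ hg]
  have hDg : D / g = r := by rw [hr, Nat.mul_div_cancel_left _ hg]
  rw [hmD, hmg, hDg]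
  exact Nat.mul_sub_one_add_sub_one_mul_le le_sup_right le_sup_left
    (Nat.pos_of_ne_zero (by rintro rfl; omega)) (Nat.pos_of_ne_zero (by rintro rfl; omega))

theorem two_mul_reprMargin_add_le {a lam : ι → ℕ} {i₀ x : ι} {s : Finset ι}
    (hlam : ∀ i, a i₀ ≤ lam i) (hi₀ : i₀ ∉ s) (hs : ∀ i ∈ s, a i < a i₀) (hx : a x < a i₀) :
    2 * reprMargin a i₀ s + (insert i₀ s).gcd a / Nat.gcd (a x) ((insert i₀ s).gcd a) * a x ≤
      ∑ i ∈ insert i₀ s, lam i * a i := by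
  set D := (insert i₀ s).gcd a
  have hDm : D ∣ a i₀ := gcd_dvd (mem_insert_self _ _)
  have hDt : D ∣ s.sup a := dvd_sup_of_forall_dvd fun i hi => gcd_dvd (mem_insert_of_mem hi)
  have hts : s.sup a < a i₀ := by
    rcases s.eq_empty_or_nonempty with rfl | hne
    · simpa using hx.trans_le' (Nat.zero_le _)
    · obtain ⟨i, hi, heq⟩ := exists_mem_eq_sup s hne a
      exact heq ▸ hs i hi
  have hcap : a i₀ * a i₀ + a i₀ * s.sup a ≤ ∑ i ∈ insert i₀ s, lam i * a i := by
    rw [sum_insert hi₀]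
    gcongr
    · exact hlam i₀
    · calc a i₀ * s.sup a ≤ a i₀ * ∑ i ∈ s, a i := Nat.mul_le_mul_left _
            (Finset.sup_le fun _ hi => single_le_sum (fun _ _ => Nat.zero_le _) hi)
        _ = ∑ i ∈ s, a i₀ * a i := mul_sum _ _ _
        _ ≤ ∑ i ∈ s, lam i * a i := sum_le_sum fun i _ => Nat.mul_le_mul_right _ (hlam i)
  exact (Nat.two_mul_mul_div_sub_one_add_mul_le hDm (Nat.div_le_self _ _) hx hts hDt).trans hcap

theorem exists_le_sum_mul_eq_of_reprMargin_le {a lam : ι → ℕ} {i₀ : ι} (hlam : ∀ i, a i₀ ≤ lam i)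
    {s : Finset ι} (hi₀ : i₀ ∉ s) (hs : ∀ i ∈ s, a i < a i₀) {R : ℕ}
    (hdvd : (insert i₀ s).gcd a ∣ R) (hlow : reprMargin a i₀ s ≤ R)
    (hhigh : R + reprMargin a i₀ s ≤ ∑ i ∈ insert i₀ s, lam i * a i) :
    ∃ μ ≤ lam, ∑ i ∈ insert i₀ s, μ i * a i = R := by
  induction s using Finset.induction_on generalizing R with
  | empty =>
    rw [insert_empty, gcd_singleton, normalize_eq] at hdvd
    rw [insert_empty, sum_singleton] at hhigh
    refine ⟨Pi.single i₀ (R / a i₀), fun i => ?_, by simpa using Nat.div_mul_cancel hdvd⟩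
    rcases eq_or_ne i i₀ with rfl | hi
    · simpa using Nat.div_le_of_le_mul (by rw [mul_comm]; omega)
    · simp [hi]
  | insert x s hx ih =>
    have hxi₀ : x ≠ i₀ := fun h => hi₀ (h ▸ mem_insert_self x s)
    have hi₀s : i₀ ∉ s := fun h => hi₀ (mem_insert_of_mem h)
    have hs' : ∀ i ∈ s, a i < a i₀ := fun i hi => hs i (mem_insert_of_mem hi)
    have hxm : a x < a i₀ := hs x (mem_insert_self x s)
    have hxs : x ∉ insert i₀ s := by simp [hxi₀, hx]
    have hD : (insert i₀ s).gcd a ∣ a i₀ := gcd_dvd (mem_insert_self _ _)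
    have hDpos : 0 < (insert i₀ s).gcd a := Nat.pos_of_dvd_of_pos hD (by omega)
    have hrm : (insert i₀ s).gcd a / Nat.gcd (a x) ((insert i₀ s).gcd a) ≤ lam x :=
      ((Nat.div_le_self _ _).trans (Nat.le_of_dvd (by omega) hD)).trans (hlam x)
    have hmargin := reprMargin_add_le (by omega : 0 < a i₀) x s
    have hcap : ∑ i ∈ insert i₀ (insert x s), lam i * a i =
        ∑ i ∈ insert i₀ s, lam i * a i + lam x * a x := by
      rw [Finset.insert_comm, sum_insert hxs, add_comm]
    rw [gcd_insert_insert] at hdvd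
    obtain ⟨c, hc, hcR, hdvd', hlow', hhigh'⟩ :=
      Nat.exists_dvd_sub_mul_mem_window hDpos.ne' hdvd hrm (by omega) (by omega)
        (two_mul_reprMargin_add_le hlam hi₀s hs' hxm)
    obtain ⟨μ, hμ, hsum⟩ := ih hi₀s hs' hdvd' hlow' hhigh'
    refine ⟨Function.update μ x c, fun i => ?_, ?_⟩
    · rcases eq_or_ne i x with rfl | hi
      · simpa using hc
      · simpa [hi] using hμ i
    · rw [Finset.insert_comm, sum_insert hxs, Function.update_self,
        sum_congr rfl fun i hi => by rw [Function.update_of_ne (ne_of_mem_of_not_mem hi hxs)]]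
      omega

end Margin

section Fintype

variable {ι : Type} [Fintype ι] {a lam : ι → ℕ} {v : ℕ}

theorem restrictedMonoid_subset_tupleMonoid : restrictedMonoid a lam ⊆ tupleMonoid a :=
  fun _ ⟨μ, _, hv⟩ => ⟨μ, hv⟩

theorem le_sum_mul_of_mem_restrictedMonoid (hv : v ∈ restrictedMonoid a lam) :
    v ≤ ∑ i, lam i * a i := by
  obtain ⟨μ, hμ, rfl⟩ := hv
  exact sum_le_sum fun i _ => Nat.mul_le_mul_right _ (hμ i)

theorem sum_mul_sub_mem_restrictedMonoid (hv : v ∈ restrictedMonoid a lam) :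
    ∑ i, lam i * a i - v ∈ restrictedMonoid a lam := by
  obtain ⟨μ, hμ, rfl⟩ := hv
  refine ⟨lam - μ, tsub_le_self, ?_⟩
  rw [Nat.sub_eq_iff_eq_add (sum_le_sum fun i _ => Nat.mul_le_mul_right _ (hμ i)),
    ← sum_add_distrib]
  exact sum_congr rfl fun i _ => by rw [Pi.sub_apply, ← add_mul, Nat.sub_add_cancel (hμ i)]

variable [DecidableEq ι] {i₀ : ι}

theorem exists_eq_sum_mul_lt (hm : 0 < a i₀) (hv : v ∈ tupleMonoid a) :
    ∃ c : ι → ℕ, (∀ i ≠ i₀, c i < a i₀) ∧ v = ∑ i, c i * a i := by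
  obtain ⟨c, rfl⟩ := hv
  refine ⟨fun i => c i % a i₀ + if i = i₀ then ∑ j, c j / a i₀ * a j else 0,
    fun i hi => by simpa [hi] using Nat.mod_lt _ hm, ?_⟩
  simp only [add_mul, ite_mul, zero_mul, sum_add_distrib, sum_ite_eq', mem_univ, if_true]
  rw [sum_mul, ← sum_add_distrib]
  refine sum_congr rfl fun j _ => ?_
  rw [mul_right_comm, ← add_mul, mul_comm (c j / a i₀), Nat.mod_add_div]

theorem mem_restrictedMonoid_of_le_mul (hm : 0 < a i₀) (hlam : ∀ i, a i₀ ≤ lam i)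
    (hv : v ∈ tupleMonoid a) (hle : v ≤ lam i₀ * a i₀) : v ∈ restrictedMonoid a lam := by
  obtain ⟨c, hc, rfl⟩ := exists_eq_sum_mul_lt hm hv
  refine ⟨c, fun i => ?_, rfl⟩
  rcases eq_or_ne i i₀ with rfl | hi
  · refine Nat.le_of_mul_le_mul_right (le_trans ?_ hle) hm
    exact single_le_sum (f := fun j => c j * a j) (fun _ _ => Nat.zero_le _) (mem_univ i)
  · exact (hc i hi).le.trans (hlam i)

theorem mem_restrictedMonoid_of_sq_le (hlam : ∀ i, a i₀ ≤ lam i) (hs : ∀ i ≠ i₀, a i < a i₀)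
    (hgcd : univ.gcd a = 1) (hlow : (a i₀ - 1) * (a i₀ - 1) ≤ v)
    (hhigh : v + (a i₀ - 1) * (a i₀ - 1) ≤ ∑ i, lam i * a i) : v ∈ restrictedMonoid a lam := by
  have hins : insert i₀ (univ.erase i₀) = univ := insert_erase (mem_univ i₀)
  have hmargin : reprMargin a i₀ (univ.erase i₀) ≤ (a i₀ - 1) * (a i₀ - 1) := by
    rw [reprMargin, hins, hgcd, Nat.div_one]
    exact Nat.mul_le_mul_right _
      (Finset.sup_le fun i hi => Nat.le_sub_one_of_lt (hs i (ne_of_mem_erase hi)))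
  obtain ⟨μ, hμ, hsum⟩ := exists_le_sum_mul_eq_of_reprMargin_le (R := v) hlam (notMem_erase i₀ univ)
    (fun i hi => hs i (ne_of_mem_erase hi)) (by rw [hins, hgcd]; exact one_dvd v) (by omega)
    (by rw [hins]; omega)
  exact ⟨μ, hμ, by rw [← hsum, hins]⟩

end Fintype

theorem exists_sup_eq_of_gcd_eq_one {ι : Type*} [Fintype ι] {a : ι → ℕ}
    (ha_inj : Function.Injective a) (ha_gcd : univ.gcd a = 1) :
    ∃ i₀, univ.sup a = a i₀ ∧ 0 < a i₀ ∧ ∀ i ≠ i₀, a i < a i₀ := by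
  obtain ⟨i₀, -, hi₀⟩ := exists_mem_eq_sup univ
    (nonempty_iff_ne_empty.2 fun h => by simp [h] at ha_gcd) a
  have hle : ∀ i, a i ≤ a i₀ := fun i => hi₀ ▸ le_sup (mem_univ i)
  refine ⟨i₀, hi₀, Nat.pos_of_ne_zero fun h => ?_, fun i hi => (hle i).lt_of_ne (ha_inj.ne hi)⟩
  rw [gcd_eq_zero_iff.2 fun i _ => Nat.eq_zero_of_le_zero (h ▸ hle i)] at ha_gcd
  exact zero_ne_one ha_gcd

theorem saturated_of_ge_max_general {p : ℕ} (a : Fin p → ℕ)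
    (ha_inj : Function.Injective a)
    (ha_gcd : Finset.univ.gcd a = 1)
    (lam : Fin p → ℕ) (hlam : ∀ i, Finset.univ.sup a ≤ lam i) :
    restrictedMonoid a lam =
      {v : ℕ | v ≤ ∑ i, lam i * a i} \
        (gapSet a ∪ {v : ℕ | ∃ g ∈ gapSet a, v + g = ∑ i, lam i * a i}) := by
  obtain ⟨i₀, hi₀, hm, hs⟩ := exists_sup_eq_of_gcd_eq_one ha_inj ha_gcd
  rw [hi₀] at hlam
  ext v
  simp only [gapSet, Set.mem_sdiff, Set.mem_union, Set.mem_ofPred_eq, not_or, not_exists, not_and,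
    not_not]
  constructor
  · intro hv
    refine ⟨le_sum_mul_of_mem_restrictedMonoid hv, restrictedMonoid_subset_tupleMonoid hv,
      fun g hg hvg => ?_⟩
    obtain ⟨μ, -, hμ⟩ := sum_mul_sub_mem_restrictedMonoid hv
    exact hg ⟨μ, by omega⟩
  · rintro ⟨hvS, hv, hSv⟩
    have hSv' : ∑ i, lam i * a i - v ∈ tupleMonoid a := by
      by_contra h
      exact hSv _ h (by omega)
    by_cases hlow : v ≤ lam i₀ * a i₀
    · exact mem_restrictedMonoid_of_le_mul hm hlam hv hlow
    by_cases hhigh : ∑ i, lam i * a i - v ≤ lam i₀ * a i₀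
    · simpa [Nat.sub_sub_self hvS] using sum_mul_sub_mem_restrictedMonoid
        (mem_restrictedMonoid_of_le_mul hm hlam hSv' hhigh)
    have hsq : (a i₀ - 1) * (a i₀ - 1) ≤ lam i₀ * a i₀ :=
      Nat.mul_le_mul ((Nat.sub_le _ _).trans (hlam i₀)) (Nat.sub_le _ _)
    exact mem_restrictedMonoid_of_sq_le hlam hs ha_gcd (by omega) (by omega)

/-- If `a` is a primitive `p`-tuple and `λ_i ≥ max(a)` for all `i`,
then `λ` is saturated for `a`:
`M(a,λ) = {0,1,…,λ·a} \ (G(a) ∪ (λ·a − G(a)))`. -/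
theorem saturated_of_ge_max {p : ℕ} (a : Fin p → ℕ)
    (ha_pos : ∀ i, 0 < a i) (ha_inj : Function.Injective a)
    (ha_gcd : Finset.univ.gcd a = 1)
    (lam : Fin p → ℕ) (hlam : ∀ i, Finset.univ.sup a ≤ lam i) :
    restrictedMonoid a lam =
      {v : ℕ | v ≤ ∑ i, lam i * a i} \
        (gapSet a ∪ {v : ℕ | ∃ g ∈ gapSet a, v + g = ∑ i, lam i * a i}) :=
  saturated_of_ge_max_general a ha_inj ha_gcd lam hlam
end

section
/- For every primitive p-tuple a = (a_1,…,a_p), the quantity r(a) satisfies r(a) ≤ (2·max(a))^p, where max(a) := max(a_1,…,a_p). -/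
/-- The Frobenius number `F(a) = max G(a)`, with `F(a) := 0` when `G(a) = ∅`
(by the `ℕ`-convention `sSup ∅ = 0`; also `sSup` of an unbounded set is `0`). -/
noncomputable def frob {ι : Type} [Fintype ι] (a : ι → ℕ) : ℕ :=
  sSup (gapSet a)

/-- `r(a) := Σ_{μ ≤ λ} F(a^λ_μ)`, where `λ_i := max(a)` for all `i`,
`I^λ_μ := {i : μ_i = λ_i}`, and `a^λ_μ := (a_i / gcd(a_i : i ∈ I^λ_μ) : i ∈ I^λ_μ)`.
The tuples `μ ≤ λ` are encoded as functions `Fin p → Fin (max(a)+1)`. -/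
noncomputable def rval {p : ℕ} (a : Fin p → ℕ) : ℕ :=
  ∑ μ : Fin p → Fin (Finset.univ.sup a + 1),
    frob (fun i : {i : Fin p // (μ i : ℕ) = Finset.univ.sup a} =>
      a i.1 / (Finset.univ.filter
        (fun i : Fin p => (μ i : ℕ) = Finset.univ.sup a)).gcd a)

open Finset

theorem List.exists_lt_take_sum_modEq {q : ℕ} (hq : 0 < q) (l : List ℕ) :
    ∃ i j, i < j ∧ j ≤ q ∧ (l.take i).sum ≡ (l.take j).sum [MOD q] := by
  obtain ⟨i, hi, j, hj, hij, heq⟩ := Finset.exists_ne_map_eq_of_card_lt_of_maps_to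
    (s := Finset.range (q + 1)) (t := Finset.range q) (f := fun k => (l.take k).sum % q)
    (by simp) (fun k _ => Finset.mem_range.mpr (Nat.mod_lt _ hq))
  simp only [Finset.mem_range] at hi hj
  rcases hij.lt_or_gt with hlt | hlt
  · exact ⟨i, j, hlt, by omega, heq⟩
  · exact ⟨j, i, hlt, by omega, heq.symm⟩

theorem List.exists_sublist_length_le_sum_modEq {q : ℕ} (hq : 0 < q) (l : List ℕ) :
    ∃ l' : List ℕ, l'.Sublist l ∧ l'.length ≤ q ∧ l'.sum ≡ l.sum [MOD q] := by
  by_cases hl : l.length ≤ q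
  · exact ⟨l, List.Sublist.refl l, hl, rfl⟩
  obtain ⟨i, j, hij, hjq, heq⟩ := l.exists_lt_take_sum_modEq hq
  have hshorter : (l.take i ++ l.drop j).length < l.length := by
    simp only [List.length_append, List.length_take, List.length_drop]; omega
  obtain ⟨l', hsub, hlen, hmod⟩ :=
    List.exists_sublist_length_le_sum_modEq hq (l.take i ++ l.drop j)
  refine ⟨l', hsub.trans ?_, hlen, hmod.trans ?_⟩
  · conv_rhs => rw [← List.take_append_drop j l]
    exact (List.take_sublist_take_left hij.le).append (List.Sublist.refl _)
  · conv_rhs => rw [← List.take_append_drop j l]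
    rw [List.sum_append, List.sum_append]
    exact Nat.ModEq.add_right _ heq
termination_by l.length

section Frobenius

variable {ι : Type} [Fintype ι]

theorem tupleMonoid_eq_closure (b : ι → ℕ) :
    tupleMonoid b = AddSubmonoid.closure (Set.range b) := by
  ext v
  simp [tupleMonoid, AddSubmonoid.mem_closure_range_iff_of_fintype]

theorem frob_eq_zero_of_isEmpty [IsEmpty ι] (b : ι → ℕ) : frob b = 0 := by
  refine Nat.sSup_of_not_bddAbove fun ⟨B, hB⟩ => ?_
  have : B + 1 ∈ gapSet b := by rintro ⟨μ, hμ⟩; simp at hμ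
  exact absurd (hB this) (by omega)

theorem frob_eq_zero_of_eq_one {b : ι → ℕ} {i : ι} (hi : b i = 1) : frob b = 0 := by
  classical
  have : gapSet b = ∅ :=
    Set.eq_empty_of_forall_notMem fun n hn => hn ⟨Pi.single i n, by simp [Pi.single_apply, hi]⟩
  rw [frob, this, csSup_empty]
  rfl

theorem mem_tupleMonoid_of_mul_le {b : ι → ℕ} (hgcd : univ.gcd b = 1) {i₀ : ι} (hi₀ : 0 < b i₀)
    {s : ℕ} (hs : ∀ i, b i ≤ s) {n : ℕ} (hn : b i₀ * s ≤ n) : n ∈ tupleMonoid b := by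
  rw [tupleMonoid_eq_closure]
  set q := b i₀
  set M := AddSubmonoid.closure (Set.range b)
  have hsetGcd : Nat.setGcd (Set.range b) ∣ 1 :=
    hgcd ▸ Finset.dvd_gcd fun i _ => Nat.setGcd_dvd_of_mem ⟨i, rfl⟩
  -- Schur's theorem puts some element of `M` in the residue class of `n` modulo `q`
  obtain ⟨N, hN⟩ := Nat.exists_mem_closure_of_ge (Set.range b)
  have hv : n + q * N ∈ M :=
    hN _ (le_add_left (Nat.le_mul_of_pos_left N hi₀)) (hsetGcd.trans (one_dvd _))
  obtain ⟨l, hl, hlsum⟩ := AddSubmonoid.exists_list_of_mem_closure hv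
  obtain ⟨l', hsub, hlen, hmod⟩ := l.exists_sublist_length_le_sum_modEq hi₀
  have hl' : ∀ x ∈ l', x ∈ Set.range b := fun x hx => hl x (hsub.subset hx)
  have hw_mem : l'.sum ∈ M := list_sum_mem fun x hx =>
    AddSubmonoid.subset_closure (hl' x hx)
  have hw_le : l'.sum ≤ q * s := by
    calc l'.sum ≤ l'.length • s := List.sum_le_card_nsmul _ _ fun x hx => by
          obtain ⟨i, rfl⟩ := hl' x hx; exact hs i
      _ ≤ q * s := Nat.mul_le_mul_right s hlen
  have hw_mod : l'.sum ≡ n [MOD q] := by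
    rw [hlsum] at hmod
    exact hmod.trans (Nat.add_modulus_mul_modEq_iff.mpr rfl)
  obtain ⟨t, ht⟩ := (Nat.modEq_iff_dvd' (hw_le.trans hn)).mp hw_mod
  have hn_eq : n = l'.sum + t • q := by rw [smul_eq_mul, mul_comm, ← ht]; omega
  rw [hn_eq]
  exact add_mem hw_mem (nsmul_mem (AddSubmonoid.subset_closure (Set.mem_range_self i₀)) t)

theorem frob_le_mul {b : ι → ℕ} (hgcd : univ.gcd b = 1) {i₀ : ι} (hi₀ : 0 < b i₀)
    {s : ℕ} (hs : ∀ i, b i ≤ s) : frob b ≤ b i₀ * s :=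
  csSup_le' fun _ hn => not_lt.mp fun h => hn (mem_tupleMonoid_of_mul_le hgcd hi₀ hs h.le)

theorem frob_div_gcd_le_pow_card (P : ι → Prop) [DecidablePred P]
    {b : ι → ℕ} (hpos : ∀ i, 0 < b i) {m : ℕ} (hb : ∀ i, b i ≤ m) :
    frob (fun i : {i // P i} => b i.1 / (univ.filter P).gcd b) ≤ m ^ #(univ.filter P) := by
  set S := univ.filter P
  have hmem : ∀ i : {i // P i}, i.1 ∈ S := fun i => mem_filter.mpr ⟨mem_univ _, i.2⟩
  obtain hS | hS | hS : #S = 0 ∨ #S = 1 ∨ 2 ≤ #S := by omega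
  · have : IsEmpty {i // P i} := ⟨fun i => notMem_empty i.1 (card_eq_zero.mp hS ▸ hmem i)⟩
    rw [frob_eq_zero_of_isEmpty]
    exact Nat.zero_le _
  · obtain ⟨i, hi⟩ := card_eq_one.mp hS
    have hPi : P i := (mem_filter.mp (hi ▸ mem_singleton_self i)).2
    rw [frob_eq_zero_of_eq_one (i := ⟨i, hPi⟩)]
    · exact Nat.zero_le _
    · simp [hi, Nat.div_self (hpos i)]
  · obtain ⟨i₀, hi₀⟩ := card_pos.mp (by omega : 0 < #S)
    have hG : 0 < S.gcd b := Nat.pos_of_ne_zero fun h =>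
      (hpos i₀).ne' (gcd_eq_zero_iff.mp h i₀ hi₀)
    have hgcd : univ.gcd (fun i : {i // P i} => b i.1 / S.gcd b) = 1 := by
      refine Nat.dvd_one.mp ((gcd_div_eq_one hi₀ (hpos i₀).ne').symm ▸ dvd_gcd fun i hi => ?_)
      exact gcd_dvd (mem_univ (⟨i, (mem_filter.mp hi).2⟩ : {i // P i}))
    have hm : 1 ≤ m := (hpos i₀).trans_le (hb i₀)
    calc frob (fun i : {i // P i} => b i.1 / S.gcd b)
        ≤ b i₀ / S.gcd b * m :=
          frob_le_mul hgcd (i₀ := ⟨i₀, (mem_filter.mp hi₀).2⟩)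
            (Nat.div_pos (Nat.le_of_dvd (hpos i₀) (gcd_dvd hi₀)) hG)
            fun i => (Nat.div_le_self _ _).trans (hb i)
      _ ≤ m ^ 2 := by rw [sq]; exact Nat.mul_le_mul_right m ((Nat.div_le_self _ _).trans (hb i₀))
      _ ≤ m ^ #S := Nat.pow_le_pow_right hm hS

end Frobenius

theorem sum_pow_card_filter_eq_two_mul_pow (p m : ℕ) :
    ∑ μ : Fin p → Fin (m + 1), m ^ #(univ.filter fun i => (μ i : ℕ) = m) = (2 * m) ^ p := by
  calc ∑ μ : Fin p → Fin (m + 1), m ^ #(univ.filter fun i => (μ i : ℕ) = m)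
      = ∑ μ : Fin p → Fin (m + 1), ∏ i, if (μ i : ℕ) = m then m else 1 := by
        simp only [prod_ite, prod_const, one_pow, mul_one]
    _ = ∏ _i : Fin p, ∑ x : Fin (m + 1), if (x : ℕ) = m then m else 1 :=
        (Fintype.prod_sum fun (_ : Fin p) (x : Fin (m + 1)) => if (x : ℕ) = m then m else 1).symm
    _ = (2 * m) ^ p := by
        have hrow : ∑ x : Fin (m + 1), (if (x : ℕ) = m then m else 1) = 2 * m := by
          rw [Fin.sum_univ_castSucc, Fin.val_last, if_pos rfl,
            sum_congr rfl fun (x : Fin m) _ => if_neg (show (x.castSucc : ℕ) ≠ m from x.is_lt.ne)]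
          simp [two_mul]
        rw [hrow, prod_const, card_univ, Fintype.card_fin]

theorem rval_le_general {p : ℕ} (a : Fin p → ℕ)
    (ha_pos : ∀ i, 0 < a i) :
    rval a ≤ (2 * Finset.univ.sup a) ^ p :=
  calc rval a ≤ ∑ μ : Fin p → Fin (univ.sup a + 1),
        univ.sup a ^ #(univ.filter fun i => (μ i : ℕ) = univ.sup a) :=
        sum_le_sum fun _ _ => frob_div_gcd_le_pow_card _ ha_pos fun i => le_sup (mem_univ i)
    _ = (2 * univ.sup a) ^ p := sum_pow_card_filter_eq_two_mul_pow p _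

/-- For every primitive `p`-tuple `a`,
`r(a) ≤ (2·max(a))^p`. -/
theorem rval_le {p : ℕ} (a : Fin p → ℕ)
    (ha_pos : ∀ i, 0 < a i) (ha_inj : Function.Injective a)
    (ha_gcd : Finset.univ.gcd a = 1) :
    rval a ≤ (2 * Finset.univ.sup a) ^ p :=
  rval_le_general a ha_pos
end

section
/- For every primitive pair a = (a_1,a_2) (i.e., p = 2), one has r(a) = F(a), the Frobenius number of a. -/
/-!
Only the tuple `μ = λ` has `I^λ_μ` equal to both indices, and there `a^λ_μ = a` because `a` is
primitive. Every other `μ` selects at most one index, and the Frobenius number of a tuple with at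
most one entry `b` is `0`: its gaps are the non-multiples of `b`, which are either absent (`b = 1`)
or unbounded, and `sSup` of an unbounded subset of `ℕ` is `0`.
-/

section Frobenius

variable {ι : Type} [Fintype ι]

theorem frob_comp_equiv {κ : Type} [Fintype κ] (e : κ ≃ ι) (a : ι → ℕ) :
    frob (a ∘ e) = frob a := by
  have : tupleMonoid (a ∘ e) = tupleMonoid a := by
    ext v
    constructor
    · rintro ⟨μ, rfl⟩
      exact ⟨μ ∘ e.symm, Fintype.sum_equiv e _ _ fun k => by simp⟩
    · rintro ⟨μ, rfl⟩
      exact ⟨μ ∘ e, (Fintype.sum_equiv e _ _ fun k => rfl).symm⟩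
  simp [frob, gapSet, this]

theorem tupleMonoid_of_subsingleton [Subsingleton ι] (a : ι → ℕ) :
    tupleMonoid a = {v | (∑ i, a i) ∣ v} := by
  ext v
  constructor
  · rintro ⟨μ, rfl⟩
    exact Finset.dvd_sum fun i _ => Fintype.sum_subsingleton a i ▸ dvd_mul_left (a i) (μ i)
  · rintro ⟨k, rfl⟩
    exact ⟨fun _ => k, by rw [← Finset.mul_sum, mul_comm]⟩

theorem Nat.sSup_setOf_not_dvd (b : ℕ) : sSup {v : ℕ | ¬ b ∣ v} = 0 := by
  by_cases hb : b = 1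
  · simp [hb]
  · -- `b` cannot divide two consecutive numbers, so the non-multiples are unbounded
    refine csSup_of_not_bddAbove ?_ |>.trans csSup_empty
    rintro ⟨n, hn⟩
    have hconsec : ¬ b ∣ n + 1 ∨ ¬ b ∣ n + 2 := by
      by_contra! h
      exact hb (Nat.dvd_one.mp ((Nat.dvd_add_right h.1).mp h.2))
    rcases hconsec with h | h <;> exact absurd (hn h) (by omega)

theorem frob_of_subsingleton [Subsingleton ι] (a : ι → ℕ) : frob a = 0 := by
  simpa [frob, gapSet, tupleMonoid_of_subsingleton] using Nat.sSup_setOf_not_dvd (∑ i, a i)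

end Frobenius

theorem Fin.subsingleton_subtype_of_not_forall_two {P : Fin 2 → Prop} (h : ¬ ∀ i, P i) :
    Subsingleton {i // P i} := by
  obtain ⟨k, hk⟩ := not_forall.mp h
  refine ⟨fun ⟨i, hi⟩ ⟨j, hj⟩ => Subtype.ext (show i = j from ?_)⟩
  have hik : i ≠ k := fun h => hk (h ▸ hi)
  have hjk : j ≠ k := fun h => hk (h ▸ hj)
  omega

theorem rval_eq_frob_of_pair_general (a : Fin 2 → ℕ)
    (ha_gcd : Finset.univ.gcd a = 1) :
    rval a = frob a := by
  set m := Finset.univ.sup a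
  have htop : ∀ i : Fin 2, ((Fin.last m : Fin (m + 1)) : ℕ) = m := fun _ => rfl
  rw [rval, Finset.sum_eq_single_of_mem (fun _ => Fin.last m) (Finset.mem_univ _)]
  · convert frob_comp_equiv (Equiv.subtypeUnivEquiv htop) a using 2
    funext i
    simp [m, ha_gcd, Equiv.subtypeUnivEquiv]
  · intro μ _ hμ
    have : Subsingleton {i // (μ i : ℕ) = m} :=
      Fin.subsingleton_subtype_of_not_forall_two fun h => hμ (funext fun i => Fin.ext (h i))
    exact frob_of_subsingleton _

/-- For every primitive pair `a = (a₁,a₂)`,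
one has `r(a) = F(a)`, the Frobenius number of `a`. -/
theorem rval_eq_frob_of_pair (a : Fin 2 → ℕ)
    (ha_pos : ∀ i, 0 < a i) (ha_inj : Function.Injective a)
    (ha_gcd : Finset.univ.gcd a = 1) :
    rval a = frob a :=
  rval_eq_frob_of_pair_general a ha_gcd
end

section
/- Let S ⊆ {0,1}^n be nonempty, w ∈ ℤ^n, and let L, U ⊆ {1,…,n} be disjoint. Put α := 1 + 2n·max_j |w_j| and v := max{(w + α(1_U − 1_L))·x : x ∈ S} − |U|·α. Then exactly one of the following holds: (i) v > −α/2, in which case S^U_L is nonempty, max{w·x : x ∈ S^U_L} = v, and the set of maximizers of w·x over S^U_L equals the set of maximizers of (w + α(1_U − 1_L))·x over S; or (ii) v < −α/2, in which case S^U_L is empty. -/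
/-- 0/1 points `x ∈ {0,1}^n` are encoded as subsets of `{1,…,n}` (their supports),
so that `w·x = ∑_{j ∈ x} w_j`. The face `S^U_L` consists of the `x ∈ S` with
`x_j = 0` for `j ∈ L` (i.e. `x` disjoint from `L`) and `x_j = 1` for `j ∈ U`
(i.e. `U ⊆ x`). -/
def face {n : ℕ} (S : Set (Finset (Fin n))) (L U : Finset (Fin n)) :
    Set (Finset (Fin n)) :=
  {x ∈ S | (∀ j ∈ L, j ∉ x) ∧ U ⊆ x}

/-!
Adding `α` on `U` and subtracting it on `L` raises the objective of every point of the face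
`S^U_L` by exactly `|U|·α`, and of every other point by at most `(|U| - 1)·α`. Since
`|w·x| ≤ n·max_j |w_j| < α/2` for every 0/1 point `x`, each point of the face beats each point
outside it for the perturbed objective. So a perturbed maximizer `x̄` lies in the face iff the face
is nonempty; in that case it maximizes `w` there, with value `v = w·x̄`, and otherwise
`v ≤ w·x̄ - α < -α/2`.
-/

open Finset

section Maximizers

variable {ι β : Type*} {S T : Set ι} {f g : ι → β} {k : β}

theorem mem_of_forall_le_of_forall_lt [Preorder β] (hTS : T ⊆ S) (hT : T.Nonempty)
    (hsep : ∀ x ∈ T, ∀ y ∈ S, y ∉ T → g y < g x) {x : ι} (hxS : x ∈ S)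
    (hx : ∀ y ∈ S, g y ≤ g x) : x ∈ T := by
  by_contra hxT
  obtain ⟨t, ht⟩ := hT
  exact (hsep t ht x hxS hxT).not_ge (hx t (hTS ht))

theorem isGreatest_of_forall_le_of_forall_lt [AddCommGroup β] [PartialOrder β]
    [IsOrderedAddMonoid β] (hTS : T ⊆ S) (hfg : ∀ x ∈ T, g x = f x + k)
    {x : ι} (hxT : x ∈ T) (hx : ∀ y ∈ S, g y ≤ g x) :
    IsGreatest {z : β | ∃ y ∈ T, z = f y} (f x) := by
  refine ⟨⟨x, hxT, rfl⟩, ?_⟩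
  rintro _ ⟨y, hyT, rfl⟩
  have := hx y (hTS hyT)
  rw [hfg y hyT, hfg x hxT] at this
  exact le_of_add_le_add_right this

theorem setOf_forall_le_eq_of_forall_lt [AddCommGroup β] [PartialOrder β]
    [IsOrderedAddMonoid β] (hTS : T ⊆ S) (hT : T.Nonempty)
    (hfg : ∀ x ∈ T, g x = f x + k) (hsep : ∀ x ∈ T, ∀ y ∈ S, y ∉ T → g y < g x) :
    {x ∈ T | ∀ y ∈ T, f y ≤ f x} = {x ∈ S | ∀ y ∈ S, g y ≤ g x} := by
  ext x
  constructor
  · rintro ⟨hxT, hx⟩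
    refine ⟨hTS hxT, fun y hyS => ?_⟩
    by_cases hyT : y ∈ T
    · rw [hfg y hyT, hfg x hxT]
      gcongr
      exact hx y hyT
    · exact (hsep x hxT y hyS hyT).le
  · rintro ⟨hxS, hx⟩
    have hxT := mem_of_forall_le_of_forall_lt hTS hT hsep hxS hx
    exact ⟨hxT, fun y hyT => ((isGreatest_of_forall_le_of_forall_lt hTS hfg hxT hx).2
      ⟨y, hyT, rfl⟩)⟩

end Maximizers

section FaceObjective

variable {ι : Type*} [DecidableEq ι]

def faceObjective (w : ι → ℤ) (a : ℤ) (L U : Finset ι) : ι → ℤ :=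
  fun j => w j + a * ((if j ∈ U then 1 else 0) - (if j ∈ L then 1 else 0))

theorem sum_faceObjective (w : ι → ℤ) (a : ℤ) (L U x : Finset ι) :
    ∑ j ∈ x, faceObjective w a L U j = ∑ j ∈ x, w j + a * (#(x ∩ U) - #(x ∩ L)) := by
  simp only [faceObjective, sum_add_distrib, ← mul_sum, sum_sub_distrib, sum_ite_mem,
    sum_const, nsmul_eq_mul, mul_one]

theorem card_inter_sub_card_inter_le {L U x : Finset ι} (hx : ¬((∀ j ∈ L, j ∉ x) ∧ U ⊆ x)) :
    (#(x ∩ U) : ℤ) - #(x ∩ L) ≤ #U - 1 := by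
  rcases not_and_or.mp hx with hL | hU
  · push Not at hL
    obtain ⟨j, hjL, hjx⟩ := hL
    have hxL : 0 < #(x ∩ L) := card_pos.mpr ⟨j, mem_inter.mpr ⟨hjx, hjL⟩⟩
    have hxU : #(x ∩ U) ≤ #U := card_le_card inter_subset_right
    omega
  · have : #(x ∩ U) < #U :=
      card_lt_card ⟨inter_subset_right, fun h => hU (h.trans inter_subset_left)⟩
    omega

theorem sum_faceObjective_of_mem (w : ι → ℤ) (a : ℤ) {L U x : Finset ι}
    (hL : ∀ j ∈ L, j ∉ x) (hU : U ⊆ x) :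
    ∑ j ∈ x, faceObjective w a L U j = ∑ j ∈ x, w j + #U * a := by
  have hxL : x ∩ L = ∅ := disjoint_iff_inter_eq_empty.mp (disjoint_right.mpr hL)
  rw [sum_faceObjective, inter_eq_right.mpr hU, hxL]
  simp [mul_comm]

theorem sum_faceObjective_le_of_notMem (w : ι → ℤ) {a : ℤ} (ha : 0 ≤ a) {L U x : Finset ι}
    (hx : ¬((∀ j ∈ L, j ∉ x) ∧ U ⊆ x)) :
    ∑ j ∈ x, faceObjective w a L U j ≤ ∑ j ∈ x, w j + (#U - 1) * a := by
  have := mul_le_mul_of_nonneg_left (card_inter_sub_card_inter_le hx) ha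
  rw [sum_faceObjective]
  linarith

theorem sum_faceObjective_lt {w : ι → ℤ} {B a : ℤ} (hB : ∀ x : Finset ι, |∑ j ∈ x, w j| ≤ B)
    (ha : 2 * B < a) {L U x y : Finset ι} (hxL : ∀ j ∈ L, j ∉ x) (hxU : U ⊆ x)
    (hy : ¬((∀ j ∈ L, j ∉ y) ∧ U ⊆ y)) :
    ∑ j ∈ y, faceObjective w a L U j < ∑ j ∈ x, faceObjective w a L U j := by
  have hB0 : 0 ≤ B := by simpa using hB ∅
  have hyw := (abs_le.mp (hB y)).2
  have hxw := (abs_le.mp (hB x)).1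
  have ha0 : 0 ≤ a := by linarith
  have := sum_faceObjective_le_of_notMem w ha0 hy
  rw [sum_faceObjective_of_mem w a hxL hxU]
  linarith

end FaceObjective

theorem abs_sum_le_card_mul_sup_natAbs {ι : Type*} [Fintype ι] (w : ι → ℤ) (x : Finset ι) :
    |∑ j ∈ x, w j| ≤ Fintype.card ι * ((univ.sup fun j => (w j).natAbs : ℕ) : ℤ) := by
  calc |∑ j ∈ x, w j| ≤ ∑ j ∈ x, |w j| := abs_sum_le_sum_abs _ _
    _ ≤ ∑ _j ∈ x, ((univ.sup fun j => (w j).natAbs : ℕ) : ℤ) := by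
        refine sum_le_sum fun j _ => ?_
        rw [Int.abs_eq_natAbs]
        exact_mod_cast le_sup (f := fun j => (w j).natAbs) (mem_univ j)
    _ ≤ Fintype.card ι * ((univ.sup fun j => (w j).natAbs : ℕ) : ℤ) := by
        rw [sum_const, nsmul_eq_mul]
        gcongr
        exact_mod_cast card_le_univ x

theorem face_reduction_general {n : ℕ} (S : Set (Finset (Fin n)))
    (w : Fin n → ℤ) (L U : Finset (Fin n))
    (α : ℤ) (hα : α = 1 + 2 * (n : ℤ) * ((Finset.univ.sup fun j => (w j).natAbs : ℕ) : ℤ))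
    (c : Fin n → ℤ)
    (hc : c = fun j => w j + α * ((if j ∈ U then 1 else 0) - (if j ∈ L then 1 else 0)))
    (xbar : Finset (Fin n)) (hxbar : xbar ∈ S)
    (hmax : ∀ x ∈ S, ∑ j ∈ x, c j ≤ ∑ j ∈ xbar, c j)
    (v : ℤ) (hv : v = (∑ j ∈ xbar, c j) - (U.card : ℤ) * α) :
    (-α < 2 * v ∧ (face S L U).Nonempty ∧
      IsGreatest {z : ℤ | ∃ x ∈ face S L U, z = ∑ j ∈ x, w j} v ∧
      {x ∈ face S L U | ∀ y ∈ face S L U, ∑ j ∈ y, w j ≤ ∑ j ∈ x, w j} =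
        {x ∈ S | ∀ y ∈ S, ∑ j ∈ y, c j ≤ ∑ j ∈ x, c j}) ∨
    (2 * v < -α ∧ face S L U = ∅) := by
  change c = faceObjective w α L U at hc
  subst hc
  set B : ℤ := n * ((univ.sup fun j => (w j).natAbs : ℕ) : ℤ)
  have hB : ∀ x : Finset (Fin n), |∑ j ∈ x, w j| ≤ B := by
    simpa using abs_sum_le_card_mul_sup_natAbs w
  have hBα : 2 * B < α := by linarith
  have hα0 : 0 ≤ α := by linarith [(abs_nonneg _).trans (hB ∅)]
  have hfaceS : face S L U ⊆ S := fun x hx => hx.1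
  have hshift : ∀ x ∈ face S L U, ∑ j ∈ x, faceObjective w α L U j = ∑ j ∈ x, w j + #U * α :=
    fun x hx => sum_faceObjective_of_mem w α hx.2.1 hx.2.2
  have hsep : ∀ x ∈ face S L U, ∀ y ∈ S, y ∉ face S L U →
      ∑ j ∈ y, faceObjective w α L U j < ∑ j ∈ x, faceObjective w α L U j :=
    fun x hx y hyS hy => sum_faceObjective_lt hB hBα hx.2.1 hx.2.2 fun h => hy ⟨hyS, h⟩
  have hxbar_w := abs_le.mp (hB xbar)
  rcases (face S L U).eq_empty_or_nonempty with hempty | hne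
  · have hxbar_off : ¬((∀ j ∈ L, j ∉ xbar) ∧ U ⊆ xbar) := fun h =>
      (Set.eq_empty_iff_forall_notMem.mp hempty) xbar ⟨hxbar, h⟩
    have hxbar_c := sum_faceObjective_le_of_notMem w hα0 hxbar_off
    exact Or.inr ⟨by linarith, hempty⟩
  · have hxbar_face := mem_of_forall_le_of_forall_lt hfaceS hne hsep hxbar hmax
    have hv_w : v = ∑ j ∈ xbar, w j := by rw [hv, hshift xbar hxbar_face]; ring
    refine Or.inl ⟨by linarith, hne, ?_, setOf_forall_le_eq_of_forall_lt hfaceS hne hshift hsep⟩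
    rw [hv_w]
    exact isGreatest_of_forall_le_of_forall_lt hfaceS hshift hxbar_face hmax

/-- With `α := 1 + 2n·max_j |w_j|`, the perturbed objective
`c := w + α(1_U − 1_L)`, and `v := max{c·x : x ∈ S} − |U|·α`, exactly one of:
(i) `v > −α/2`, and then `S^U_L ≠ ∅`, `max{w·x : x ∈ S^U_L} = v`, and the
maximizers of `w·x` over `S^U_L` are exactly the maximizers of `c·x` over `S`;
(ii) `v < −α/2`, and then `S^U_L = ∅`.
(The comparisons with `−α/2` are stated integrally as `2v > −α`, `2v < −α`;
these two cases are mutually exclusive.) -/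
theorem face_reduction {n : ℕ} (S : Set (Finset (Fin n))) (hS : S.Nonempty)
    (w : Fin n → ℤ) (L U : Finset (Fin n)) (hLU : Disjoint L U)
    (α : ℤ) (hα : α = 1 + 2 * (n : ℤ) * ((Finset.univ.sup fun j => (w j).natAbs : ℕ) : ℤ))
    (c : Fin n → ℤ)
    (hc : c = fun j => w j + α * ((if j ∈ U then 1 else 0) - (if j ∈ L then 1 else 0)))
    (xbar : Finset (Fin n)) (hxbar : xbar ∈ S)
    (hmax : ∀ x ∈ S, ∑ j ∈ x, c j ≤ ∑ j ∈ xbar, c j)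
    (v : ℤ) (hv : v = (∑ j ∈ xbar, c j) - (U.card : ℤ) * α) :
    (-α < 2 * v ∧ (face S L U).Nonempty ∧
      IsGreatest {z : ℤ | ∃ x ∈ face S L U, z = ∑ j ∈ x, w j} v ∧
      {x ∈ face S L U | ∀ y ∈ face S L U, ∑ j ∈ y, w j ≤ ∑ j ∈ x, w j} =
        {x ∈ S | ∀ y ∈ S, ∑ j ∈ y, c j ≤ ∑ j ∈ x, c j}) ∨
    (2 * v < -α ∧ face S L U = ∅) :=
  face_reduction_general S w L U α hα c hc xbar hxbar hmax v hv
end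

section
/- Let a = (a_1,…,a_p) be a primitive p-tuple, S ⊆ {0,1}^n an independence system, w ∈ {a_1,…,a_p}^n, and define λ ∈ ℤ_+^p by λ_i := max(a) for all i. Let μ ≤ λ be such that S^λ_μ ≠ ∅, let x_μ be any maximizer of w·x over S^λ_μ, and let T := {x ∈ {0,1}^n : x ≤ x_μ}. Then |w·S^λ_μ \ w·T| ≤ |G(a^λ_μ)| ≤ F(a^λ_μ). -/
/-- 0/1 points `x ∈ {0,1}^n` are encoded as subsets of `{1,…,n}` (their supports);
`x ≤ y` is `x ⊆ y` and `w·x = ∑_{j ∈ x} w_j`.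
Here `λ_i(x) = |supp(x) ∩ N_i|` where `N_i = {j : w_j = a_i}`. -/
def lamCoord {n p : ℕ} (a : Fin p → ℕ) (w : Fin n → ℕ)
    (x : Finset (Fin n)) (i : Fin p) : ℕ :=
  (x.filter fun j => w j = a i).card

/-- The block `S^λ_μ` of `S` induced by `μ ≤ λ`. -/
def block {n p : ℕ} (a : Fin p → ℕ) (w : Fin n → ℕ) (S : Set (Finset (Fin n)))
    (lam μ : Fin p → ℕ) : Set (Finset (Fin n)) :=
  {x ∈ S | ∀ i, (μ i < lam i → lamCoord a w x i = μ i) ∧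
                (μ i = lam i → μ i ≤ lamCoord a w x i)}

/-- The subtuple `a^λ_μ := (a_i / gcd(a_i : i ∈ I^λ_μ) : i ∈ I^λ_μ)` where
`I^λ_μ := {i : μ_i = λ_i}` (the empty tuple if `I^λ_μ = ∅`). -/
def subTuple {p : ℕ} (a lam μ : Fin p → ℕ) : {i : Fin p // μ i = lam i} → ℕ :=
  fun i => a i.1 / (Finset.univ.filter (fun i : Fin p => μ i = lam i)).gcd a

open Finset

section Gaps

variable {ι : Type} [Fintype ι]

lemma mem_tupleMonoid_iff {b : ι → ℕ} {v : ℕ} :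
    v ∈ tupleMonoid b ↔ v ∈ AddSubmonoid.closure (Set.range b) := by
  simp [tupleMonoid, AddSubmonoid.mem_closure_range_iff_of_fintype]

lemma finite_gapSet {b : ι → ℕ} (hb : Nat.setGcd (Set.range b) = 1) : (gapSet b).Finite := by
  obtain ⟨N, hN⟩ := Nat.exists_mem_closure_of_ge (Set.range b)
  refine (Set.finite_Iio N).subset fun v hv => ?_
  by_contra hvN
  exact hv (mem_tupleMonoid_iff.2 (hN v (not_lt.1 hvN) (hb ▸ one_dvd v)))

lemma ncard_gapSet_le_frob (b : ι → ℕ) : (gapSet b).ncard ≤ frob b := by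
  by_cases hfin : (gapSet b).Finite
  · have hsub : gapSet b ⊆ Set.Icc 1 (frob b) := fun g hg =>
      ⟨Nat.pos_of_ne_zero fun h => hg ⟨0, by simp [h]⟩, le_csSup hfin.bddAbove hg⟩
    calc (gapSet b).ncard ≤ (Set.Icc 1 (frob b)).ncard :=
          Set.ncard_le_ncard hsub (Set.finite_Icc _ _)
      _ = frob b := by simp [Set.ncard_eq_toFinset_card']
  · simp [Set.Infinite.ncard hfin]

variable [DecidableEq ι] {b u ν : ι → ℕ} {m : ℕ}

/-- If some `ν_i > u_i`, the bound on `∑ ν b` yields a `k` with `ν_k < u_k - m`; trading `b_k`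
units of coordinate `i` for `b_i` units of coordinate `k` keeps `∑ ν b` and lowers the excess. -/
lemma exists_sum_mul_eq_excess_lt (hbm : ∀ i, b i ≤ m) (hmu : ∀ i, m ≤ u i)
    (hν : ∑ i, ν i * b i ≤ ∑ i, (u i - m) * b i) {i : ι} (hi : u i < ν i) (hbi : 0 < b i) :
    ∃ ν' : ι → ℕ, ∑ j, ν' j * b j = ∑ j, ν j * b j ∧
      ∑ j, (ν' j - u j) < ∑ j, (ν j - u j) := by
  obtain ⟨k, hk⟩ : ∃ k, ν k * b k < (u k - m) * b k := by
    by_contra! hge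
    refine (sum_lt_sum (fun j _ => hge j) ⟨i, mem_univ i, ?_⟩).not_ge hν
    exact Nat.mul_lt_mul_of_pos_right (by omega) hbi
  have hνk : ν k < u k - m := lt_of_mul_lt_mul_right hk (Nat.zero_le _)
  have hki : k ≠ i := by rintro rfl; have := hmu k; omega
  have hbk : 0 < b k := Nat.pos_of_ne_zero fun h => by simp [h] at hk
  have hbki : b k ≤ ν i := by have := hbm k; have := hmu i; omega
  set ν' := ν - Pi.single i (b k) + Pi.single k (b i)
  have hsingle : ∀ l c, ∑ j, Pi.single l c j * b j = c * b l := fun l c => by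
    simp [Pi.single_apply]
  have htrade : ν' + Pi.single i (b k) = ν + Pi.single k (b i) := by
    ext j
    simp only [ν', Pi.add_apply, Pi.sub_apply, Pi.single_apply]
    split_ifs <;> subst_vars <;> omega
  refine ⟨ν', ?_, sum_lt_sum (fun j _ => ?_) ⟨i, mem_univ i, ?_⟩⟩
  · have := congrArg (fun f : ι → ℕ => ∑ j, f j * b j) htrade
    simp only [Pi.add_apply, add_mul, sum_add_distrib, hsingle] at this
    linarith [mul_comm (b k) (b i)]
  · have := hbm i
    simp only [ν', Pi.add_apply, Pi.sub_apply, Pi.single_apply]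
    split_ifs <;> subst_vars <;> omega
  · simp [ν', hki.symm]
    omega

lemma exists_le_sum_mul_eq (hb : ∀ i, 0 < b i) (hbm : ∀ i, b i ≤ m) (hmu : ∀ i, m ≤ u i)
    (hν : ∑ i, ν i * b i ≤ ∑ i, (u i - m) * b i) :
    ∃ ν' ≤ u, ∑ i, ν' i * b i = ∑ i, ν i * b i := by
  induction hE : ∑ i, (ν i - u i) using Nat.strong_induction_on generalizing ν with
  | _ E ih =>
    by_cases hle : ν ≤ u
    · exact ⟨ν, hle, rfl⟩
    obtain ⟨i, hi⟩ : ∃ i, u i < ν i := by simpa [Pi.le_def] using hle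
    obtain ⟨ν', hsum, hlt⟩ := exists_sum_mul_eq_excess_lt hbm hmu hν hi (hb i)
    obtain ⟨ν'', hle'', hsum''⟩ := ih _ (hE ▸ hlt) (hsum ▸ hν) rfl
    exact ⟨ν'', hle'', hsum''.trans hsum⟩

end Gaps

section Block

variable {n p : ℕ} {a : Fin p → ℕ} {w : Fin n → ℕ}

lemma sum_eq_sum_mul_lamCoord (ha_inj : Function.Injective a) (hw : ∀ j, ∃ i, w j = a i)
    (x : Finset (Fin n)) : ∑ j ∈ x, w j = ∑ i, a i * lamCoord a w x i := by
  have hclass : ∀ j, w j = ∑ i, if w j = a i then a i else 0 := fun j => by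
    obtain ⟨i, hi⟩ := hw j
    simp [hi, ha_inj.eq_iff]
  rw [sum_congr rfl fun j _ => hclass j, sum_comm]
  simp [lamCoord, sum_ite, mul_comm]

lemma exists_subset_lamCoord_eq (ha_inj : Function.Injective a) (x : Finset (Fin n))
    {t : Fin p → ℕ} (ht : ∀ i, t i ≤ lamCoord a w x i) :
    ∃ y ⊆ x, ∀ i, lamCoord a w y i = t i := by
  choose f hfx hft using fun i => exists_subset_card_eq (ht i)
  have hclass : ∀ i j, j ∈ f i → w j = a i := fun i j hj => (mem_filter.1 (hfx i hj)).2
  refine ⟨univ.biUnion f, fun j hj => ?_, fun i => ?_⟩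
  · obtain ⟨i, -, hji⟩ := mem_biUnion.1 hj
    exact (mem_filter.1 (hfx i hji)).1
  · rw [lamCoord, ← hft i]
    congr 1
    ext j
    simp only [mem_filter, mem_biUnion, mem_univ, true_and]
    constructor
    · rintro ⟨⟨i', hji'⟩, hwj⟩
      rwa [ha_inj ((hclass i' j hji').symm.trans hwj)] at hji'
    · exact fun hj => ⟨⟨i, hj⟩, hclass i j hj⟩

variable {S : Set (Finset (Fin n))} {lam μ : Fin p → ℕ}

def blockGcd (a lam μ : Fin p → ℕ) : ℕ :=
  (univ.filter fun i : Fin p => μ i = lam i).gcd a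

def reducedWeight (a : Fin p → ℕ) (w : Fin n → ℕ) (lam μ : Fin p → ℕ) (x : Finset (Fin n)) : ℕ :=
  ∑ i : {i // μ i = lam i}, lamCoord a w x i * subTuple a lam μ i

lemma blockGcd_dvd (i : {i // μ i = lam i}) : blockGcd a lam μ ∣ a i :=
  gcd_dvd (mem_filter.2 ⟨mem_univ _, i.2⟩)

lemma blockGcd_mul_subTuple (i : {i // μ i = lam i}) :
    blockGcd a lam μ * subTuple a lam μ i = a i :=
  Nat.mul_div_cancel' (blockGcd_dvd i)

lemma subTuple_le_sup (i : {i // μ i = lam i}) : subTuple a lam μ i ≤ univ.sup a :=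
  (Nat.div_le_self _ _).trans (le_sup (mem_univ _))

lemma subTuple_pos (ha_pos : ∀ i, 0 < a i) (i : {i // μ i = lam i}) : 0 < subTuple a lam μ i := by
  have hd : blockGcd a lam μ ≠ 0 := fun h => (ha_pos i).ne' (gcd_eq_zero_iff.1 h i (by simp [i.2]))
  exact Nat.div_pos (Nat.le_of_dvd (ha_pos i) (blockGcd_dvd i)) (Nat.pos_of_ne_zero hd)

lemma setGcd_range_subTuple (hd : blockGcd a lam μ ≠ 0) :
    Nat.setGcd (Set.range (subTuple a lam μ)) = 1 := by
  obtain ⟨i, hi, hai⟩ := gcd_ne_zero_iff.1 hd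
  refine Nat.dvd_one.1 ?_
  rw [← gcd_div_eq_one hi hai]
  exact dvd_gcd fun j hj => Nat.setGcd_dvd_of_mem ⟨⟨j, (mem_filter.1 hj).2⟩, rfl⟩

lemma sum_eq_add_blockGcd_mul (ha_inj : Function.Injective a) (hw : ∀ j, ∃ i, w j = a i)
    {x : Finset (Fin n)} (hx : ∀ i, ¬μ i = lam i → lamCoord a w x i = μ i) :
    ∑ j ∈ x, w j = ∑ i with ¬μ i = lam i, a i * μ i +
      blockGcd a lam μ * reducedWeight a w lam μ x := by
  rw [sum_eq_sum_mul_lamCoord ha_inj hw,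
    ← sum_filter_not_add_sum_filter univ fun i => μ i = lam i,
    sum_subtype (univ.filter fun i => μ i = lam i) (p := fun i => μ i = lam i) (by simp),
    reducedWeight, mul_sum]
  congr 1
  · exact sum_congr rfl fun i hi => by rw [hx i (mem_filter.1 hi).2]
  · exact sum_congr rfl fun i _ => by
      rw [← blockGcd_mul_subTuple (a := a) i]
      ring

lemma exists_subset_add_reducedWeight_eq (ha_inj : Function.Injective a) (x : Finset (Fin n))
    {ν : {i // μ i = lam i} → ℕ} (hν : ∀ i, ν i ≤ lamCoord a w x i) :
    ∃ y ⊆ x, (∀ i, ¬μ i = lam i → lamCoord a w y i = lamCoord a w x i) ∧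
      reducedWeight a w lam μ y + ∑ i, ν i * subTuple a lam μ i = reducedWeight a w lam μ x := by
  obtain ⟨y, hyx, hy⟩ := exists_subset_lamCoord_eq (w := w) ha_inj x
    (t := fun i => if h : μ i = lam i then lamCoord a w x i - ν ⟨i, h⟩ else lamCoord a w x i)
    fun i => by split_ifs <;> omega
  refine ⟨y, hyx, fun i hi => by simp [hy, hi], ?_⟩
  simp only [reducedWeight, hy, ← sum_add_distrib, ← add_mul]
  exact sum_congr rfl fun i _ => by rw [dif_pos i.2, Nat.sub_add_cancel (hν i)]

lemma lamCoord_eq_of_mem_block (hμ : μ ≤ lam) {x : Finset (Fin n)} (hx : x ∈ block a w S lam μ)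
    (i : Fin p) (hi : ¬μ i = lam i) : lamCoord a w x i = μ i :=
  (hx.2 i).1 (lt_of_le_of_ne (hμ i) hi)

lemma sup_le_lamCoord_of_mem_block (hlam : lam = fun _ => univ.sup a) {x : Finset (Fin n)}
    (hx : x ∈ block a w S lam μ) (i : {i // μ i = lam i}) : univ.sup a ≤ lamCoord a w x i := by
  simpa [i.2, hlam] using (hx.2 i).2 i.2

lemma sum_sub_sup_mul_add_eq_reducedWeight (hlam : lam = fun _ => univ.sup a)
    {x : Finset (Fin n)} (hx : x ∈ block a w S lam μ) :
    ∑ i : {i // μ i = lam i}, (lamCoord a w x i - univ.sup a) * subTuple a lam μ i +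
      ∑ i, univ.sup a * subTuple a lam μ i = reducedWeight a w lam μ x := by
  rw [← sum_add_distrib]
  exact sum_congr rfl fun i _ => by
    rw [← add_mul, Nat.sub_add_cancel (sup_le_lamCoord_of_mem_block hlam hx i)]

lemma exists_gap_add_eq_of_mem_diff (ha_pos : ∀ i, 0 < a i) (ha_inj : Function.Injective a)
    (hw : ∀ j, ∃ i, w j = a i) (hlam : lam = fun _ => univ.sup a)
    (hμ : μ ≤ lam) {xμ : Finset (Fin n)} (hxμ : xμ ∈ block a w S lam μ)
    (hxμ_max : ∀ x ∈ block a w S lam μ, ∑ j ∈ x, w j ≤ ∑ j ∈ xμ, w j)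
    (hd : 0 < blockGcd a lam μ) {v : ℕ}
    (hv : v ∈ ((fun x : Finset (Fin n) => ∑ j ∈ x, w j) '' block a w S lam μ) \
        ((fun x : Finset (Fin n) => ∑ j ∈ x, w j) '' {x | x ⊆ xμ})) :
    ∃ g ∈ gapSet (subTuple a lam μ), v + blockGcd a lam μ * g = ∑ j ∈ xμ, w j := by
  obtain ⟨⟨x, hx, rfl⟩, hvT⟩ := hv
  dsimp only at hvT ⊢
  set L := reducedWeight a w lam μ with hL
  have hsum : ∀ y ∈ block a w S lam μ, ∑ j ∈ y, w j =
      ∑ i with ¬μ i = lam i, a i * μ i + blockGcd a lam μ * L y := fun y hy =>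
    sum_eq_add_blockGcd_mul ha_inj hw (lamCoord_eq_of_mem_block hμ hy)
  have hLx : L x ≤ L xμ := by
    have := hxμ_max x hx
    rw [hsum x hx, hsum xμ hxμ] at this
    exact Nat.le_of_mul_le_mul_left (by omega) hd
  refine ⟨L xμ - L x, ?_, by rw [hsum x hx, hsum xμ hxμ, add_assoc, ← mul_add,
    Nat.add_sub_cancel' hLx]⟩
  rintro ⟨ν, hν⟩
  have hLx_split := sum_sub_sup_mul_add_eq_reducedWeight hlam hx
  have hLxμ_split := sum_sub_sup_mul_add_eq_reducedWeight hlam hxμ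
  rw [← hL] at hLx_split hLxμ_split
  obtain ⟨ν', hν'le, hν'⟩ := exists_le_sum_mul_eq (subTuple_pos ha_pos) subTuple_le_sup
    (sup_le_lamCoord_of_mem_block hlam hxμ) (ν := ν) (by omega)
  obtain ⟨y, hyxμ, hy_off, hyL⟩ := exists_subset_add_reducedWeight_eq ha_inj xμ hν'le
  rw [← hL] at hyL
  have hy : ∑ j ∈ y, w j = ∑ i with ¬μ i = lam i, a i * μ i + blockGcd a lam μ * L y :=
    sum_eq_add_blockGcd_mul ha_inj hw fun i hi =>
      (hy_off i hi).trans (lamCoord_eq_of_mem_block hμ hxμ i hi)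
  refine hvT ⟨y, hyxμ, ?_⟩
  dsimp only
  rw [hy, hsum x hx]
  congr 2
  omega

end Block

theorem block_image_approx_general {n p : ℕ} (a : Fin p → ℕ)
    (ha_pos : ∀ i, 0 < a i) (ha_inj : Function.Injective a)
    (S : Set (Finset (Fin n)))
    (w : Fin n → ℕ) (hw : ∀ j, ∃ i, w j = a i)
    (lam : Fin p → ℕ) (hlam : lam = fun _ => Finset.univ.sup a)
    (μ : Fin p → ℕ) (hμ : μ ≤ lam)
    (xμ : Finset (Fin n)) (hxμ : xμ ∈ block a w S lam μ)
    (hxμ_max : ∀ x ∈ block a w S lam μ, ∑ j ∈ x, w j ≤ ∑ j ∈ xμ, w j) :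
    (((fun x : Finset (Fin n) => ∑ j ∈ x, w j) '' block a w S lam μ) \
        ((fun x : Finset (Fin n) => ∑ j ∈ x, w j) '' {x | x ⊆ xμ})).ncard ≤
      (gapSet (subTuple a lam μ)).ncard ∧
    (gapSet (subTuple a lam μ)).ncard ≤ frob (subTuple a lam μ) := by
  refine ⟨?_, ncard_gapSet_le_frob _⟩
  rcases Nat.eq_zero_or_pos (blockGcd a lam μ) with hd | hd
  · have hsum : ∀ x ∈ block a w S lam μ, ∑ j ∈ x, w j = ∑ i with ¬μ i = lam i, a i * μ i :=
      fun x hx => by rw [sum_eq_add_blockGcd_mul ha_inj hw (lamCoord_eq_of_mem_block hμ hx), hd,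
        zero_mul, add_zero]
    rw [Set.sdiff_eq_empty.2, Set.ncard_empty]
    · exact Nat.zero_le _
    rintro _ ⟨x, hx, rfl⟩
    exact ⟨xμ, Set.mem_ofPred.2 subset_rfl, by simp only [hsum x hx, hsum xμ hxμ]⟩
  · have hfin := finite_gapSet (setGcd_range_subTuple hd.ne')
    calc _ ≤ ((fun g => ∑ j ∈ xμ, w j - blockGcd a lam μ * g) '' gapSet (subTuple a lam μ)).ncard :=
          Set.ncard_le_ncard (fun v hv => ?_) (hfin.image _)
      _ ≤ _ := Set.ncard_image_le hfin
    obtain ⟨g, hg, hvg⟩ := exists_gap_add_eq_of_mem_diff ha_pos ha_inj hw hlam hμ hxμ hxμ_max hd hv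
    exact ⟨g, hg, by dsimp only; omega⟩

/-- Let `a` be primitive, `S` an independence system,
`w ∈ {a₁,…,a_p}^n`, `λ_i := max(a)` for all `i`, and `μ ≤ λ` with `S^λ_μ ≠ ∅`.
If `x_μ` maximizes `w·x` over `S^λ_μ` and `T := {x : x ≤ x_μ}`, then
`|w·S^λ_μ \ w·T| ≤ |G(a^λ_μ)| ≤ F(a^λ_μ)`. -/
theorem block_image_approx {n p : ℕ} (a : Fin p → ℕ)
    (ha_pos : ∀ i, 0 < a i) (ha_inj : Function.Injective a)
    (ha_gcd : Finset.univ.gcd a = 1)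
    (S : Set (Finset (Fin n))) (hS_ne : S.Nonempty)
    (hS_indep : ∀ x y : Finset (Fin n), x ⊆ y → y ∈ S → x ∈ S)
    (w : Fin n → ℕ) (hw : ∀ j, ∃ i, w j = a i)
    (lam : Fin p → ℕ) (hlam : lam = fun _ => Finset.univ.sup a)
    (μ : Fin p → ℕ) (hμ : μ ≤ lam)
    (xμ : Finset (Fin n)) (hxμ : xμ ∈ block a w S lam μ)
    (hxμ_max : ∀ x ∈ block a w S lam μ, ∑ j ∈ x, w j ≤ ∑ j ∈ xμ, w j) :
    (((fun x : Finset (Fin n) => ∑ j ∈ x, w j) '' block a w S lam μ) \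
        ((fun x : Finset (Fin n) => ∑ j ∈ x, w j) '' {x | x ⊆ xμ})).ncard ≤
      (gapSet (subTuple a lam μ)).ncard ∧
    (gapSet (subTuple a lam μ)).ncard ≤ frob (subTuple a lam μ) :=
  block_image_approx_general a ha_pos ha_inj S w hw lam hlam μ hμ xμ hxμ hxμ_max
end

section
/- Let a = (a_1,…,a_p) be a primitive p-tuple, S ⊆ {0,1}^n an independence system, w ∈ {a_1,…,a_p}^n, and define λ ∈ ℤ_+^p by λ_i := max(a) for all i. For each μ ≤ λ with S^λ_μ ≠ ∅, let x_μ be any maximizer of w·x over S^λ_μ and let T_μ := {x ∈ {0,1}^n : x ≤ x_μ}. Then at most r(a) values of the image w·S lie outside ⋃_μ w·T_μ, i.e., |w·S \ ⋃_{μ ≤ λ, S^λ_μ ≠ ∅} w·T_μ| ≤ r(a). Consequently, any x* minimizing f(w·x) over ⋃_μ T_μ ∩ S is an r(a)-best solution to min{f(w·x) : x ∈ S} for any f : ℤ → ℝ. -/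
/-!
Every `x ∈ S` lies in the block `μ` with `μ i = min (λ_i(x), max a)`. Inside a block the
coordinates `λ_i` with `μ i < max a` are fixed, so `w·x_μ - w·x = g * t` with
`g = gcd (a_i : μ i = max a)`, and `λ_i(x) ≥ max a` bounds `g * t` by
`∑ (λ_i(x_μ) - max a) * a_i`. Should `t` be a nonnegative combination of the `a_i / g`, an
exchange argument (using `a_i ≤ max a`) rewrites `g * t` as a combination using at most
`λ_i(x_μ)` copies of each `a_i`; deleting those elements from `x_μ` gives a `y ⊆ x_μ` with
`w·y = w·x`. So the values a block misses are of the form `w·x_μ - g * t` with `t` a gap of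
`(a_i / g)`, and there are at most `F(a^λ_μ)` of them.
-/

open Finset

theorem bddAbove_gapSet {ι : Type} [Fintype ι] (b : ι → ℕ) (hb : univ.gcd b = 1) :
    BddAbove (gapSet b) := by
  obtain ⟨N, hN⟩ := Nat.exists_mem_closure_of_ge (Set.range b)
  refine ⟨N, fun v hv => le_of_not_gt fun hNv => hv ?_⟩
  have hgcd : Nat.setGcd (Set.range b) = 1 := Nat.dvd_one.mp <|
    hb ▸ Finset.dvd_gcd fun i _ => Nat.setGcd_dvd_of_mem ⟨i, rfl⟩
  have hv_span := hN v hNv.le (hgcd ▸ one_dvd v)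
  rw [← Submodule.span_nat_eq_addSubmonoidClosure, Submodule.mem_toAddSubmonoid,
    Submodule.mem_span_range_iff_exists_fun] at hv_span
  obtain ⟨ν, hν⟩ := hv_span
  exact ⟨ν, by simp [← hν]⟩

theorem mul_mem_tupleMonoid {ι : Type} [Fintype ι] {b : ι → ℕ} {t : ℕ}
    (ht : t ∈ tupleMonoid b) (g : ℕ) : g * t ∈ tupleMonoid fun i => g * b i := by
  obtain ⟨ν, rfl⟩ := ht
  exact ⟨ν, by rw [Finset.mul_sum]; ring_nf⟩

/-- An index `i` over its capacity gives up `c j` units to an index `j` with room for `c i` more;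
the room exists because otherwise the sum bound `hν` would fail. -/
theorem exists_exchange_of_lt {ι : Type*} [Fintype ι] [DecidableEq ι] {c cap ν : ι → ℕ}
    {M : ℕ} (hc_pos : ∀ i, 0 < c i) (hcM : ∀ i, c i ≤ M) (hMcap : ∀ i, M ≤ cap i)
    (hν : ∑ i, ν i * c i ≤ ∑ i, (cap i - M) * c i) {i : ι} (hi : cap i < ν i) :
    ∃ ν' : ι → ℕ, ∑ k, ν' k * c k = ∑ k, ν k * c k ∧
      ∑ k, (ν' k - cap k) < ∑ k, (ν k - cap k) := by
  obtain ⟨j, hj⟩ : ∃ j, ν j + M < cap j := by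
    by_contra! h
    have : ∑ k, (cap k - M) * c k < ∑ k, ν k * c k :=
      Finset.sum_lt_sum (fun k _ => Nat.mul_le_mul_right _ (by have := h k; omega))
        ⟨i, mem_univ i, Nat.mul_lt_mul_of_pos_right (by omega) (hc_pos i)⟩
    omega
  have hij : i ≠ j := by rintro rfl; omega
  have hcj := hcM j
  have hMi := hMcap i
  set ν' : ι → ℕ := fun k => if k = i then ν i - c j else if k = j then ν j + c i else ν k
  have hsplit : ∀ f : ι → ℕ, ∑ k, f k = f i + f j + ∑ k ∈ univ \ {i, j}, f k := fun f => by
    rw [← Finset.sum_sdiff (subset_univ {i, j}), Finset.sum_pair hij, add_comm]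
  have hrest : ∀ k ∈ univ \ {i, j}, ν' k = ν k := fun k hk => by
    simp only [mem_sdiff, mem_univ, mem_insert, mem_singleton, true_and, not_or] at hk
    simp [ν', hk.1, hk.2]
  refine ⟨ν', ?_, ?_⟩
  · rw [hsplit, hsplit fun k => ν k * c k,
      Finset.sum_congr rfl fun k hk => by rw [hrest k hk]]
    obtain ⟨d, hd⟩ : ∃ d, ν i = c j + d := ⟨ν i - c j, by omega⟩
    simp only [ν', if_pos rfl, if_neg hij.symm, if_true, hd, Nat.add_sub_cancel_left]
    ring
  · refine Finset.sum_lt_sum (fun k _ => ?_) ⟨i, mem_univ i, ?_⟩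
    · have := hcM i
      simp only [ν']
      split_ifs with hki hkj
      · subst hki; omega
      · subst hkj; omega
      · exact le_rfl
    · have := hc_pos j
      simp only [ν', if_pos rfl]
      omega

theorem exists_le_sum_mul_eq_of_sum_mul_le {ι : Type*} [Fintype ι] {c cap : ι → ℕ} {M : ℕ}
    (hc_pos : ∀ i, 0 < c i) (hcM : ∀ i, c i ≤ M) (hMcap : ∀ i, M ≤ cap i) (ν : ι → ℕ)
    (hν : ∑ i, ν i * c i ≤ ∑ i, (cap i - M) * c i) :
    ∃ ν' ≤ cap, ∑ i, ν' i * c i = ∑ i, ν i * c i := by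
  classical
  induction h : ∑ i, (ν i - cap i) using Nat.strong_induction_on generalizing ν with
  | _ N ih =>
    by_cases hcap : ν ≤ cap
    · exact ⟨ν, hcap, rfl⟩
    obtain ⟨i, hi⟩ : ∃ i, cap i < ν i := by
      simpa [Pi.le_def] using hcap
    obtain ⟨ν', hsum, hlt⟩ := exists_exchange_of_lt hc_pos hcM hMcap hν hi
    obtain ⟨ν'', hle, hsum'⟩ := ih _ (h ▸ hlt) ν' (hsum ▸ hν) rfl
    exact ⟨ν'', hle, hsum'.trans hsum⟩

theorem sum_eq_sum_card_filter_mul {α ι : Type*} [Fintype ι] {c : ι → ℕ}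
    (hc : Function.Injective c) {w : α → ℕ} (hw : ∀ j, ∃ i, w j = c i) (x : Finset α) :
    ∑ j ∈ x, w j = ∑ i, (x.filter fun j => w j = c i).card * c i := by
  classical
  choose idx hidx using hw
  have hfiber : ∀ i, x.filter (fun j => w j = c i) = x.filter (fun j => idx j = i) :=
    fun i => Finset.filter_congr fun j _ => by rw [hidx j, hc.eq_iff]
  rw [← Finset.sum_fiberwise_of_maps_to (fun j _ => mem_univ (idx j))]
  refine Finset.sum_congr rfl fun i _ => ?_
  rw [← hfiber, ← smul_eq_mul, ← Finset.sum_const]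
  exact Finset.sum_congr rfl fun j hj => (Finset.mem_filter.mp hj).2

theorem exists_subset_add_sum_eq {α ι : Type*} [DecidableEq α] [Fintype ι] {c : ι → ℕ}
    (hc : Function.Injective c) (w : α → ℕ) (z : Finset α) (ν : ι → ℕ)
    (hν : ∀ i, ν i ≤ (z.filter fun j => w j = c i).card) :
    ∃ y ⊆ z, ∑ j ∈ y, w j + ∑ i, ν i * c i = ∑ j ∈ z, w j := by
  choose R hRz hRcard using fun i => Finset.exists_subset_card_eq (hν i)
  have hdisj : Set.PairwiseDisjoint (Set.univ : Set ι) R := fun i _ i' _ hii' =>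
    Finset.disjoint_left.mpr fun j hj hj' => hii' <| hc <|
      (Finset.mem_filter.mp (hRz i hj)).2.symm.trans (Finset.mem_filter.mp (hRz i' hj')).2
  have hRsub : univ.biUnion R ⊆ z := Finset.biUnion_subset.mpr fun i _ =>
    (hRz i).trans (Finset.filter_subset _ _)
  refine ⟨z \ univ.biUnion R, Finset.sdiff_subset, ?_⟩
  rw [← Finset.sum_sdiff hRsub, Finset.sum_biUnion (by simpa using hdisj)]
  congr 1
  refine Finset.sum_congr rfl fun i _ => ?_
  rw [Finset.sum_congr rfl fun j hj => (Finset.mem_filter.mp (hRz i hj)).2,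
    Finset.sum_const, hRcard, smul_eq_mul]

theorem exists_subset_add_eq_of_mem_tupleMonoid {α : Type*} {ι : Type} [DecidableEq α] [Fintype ι]
    {c : ι → ℕ} (hc_pos : ∀ i, 0 < c i) (hc : Function.Injective c) {M : ℕ}
    (hcM : ∀ i, c i ≤ M) (w : α → ℕ) {z : Finset α}
    (hz : ∀ i, M ≤ (z.filter fun j => w j = c i).card) {s : ℕ} (hs : s ∈ tupleMonoid c)
    (hs_le : s ≤ ∑ i, ((z.filter fun j => w j = c i).card - M) * c i) :
    ∃ y ⊆ z, ∑ j ∈ y, w j + s = ∑ j ∈ z, w j := by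
  obtain ⟨ν, rfl⟩ := hs
  obtain ⟨ν', hν'_le, hν'⟩ := exists_le_sum_mul_eq_of_sum_mul_le hc_pos hcM hz ν hs_le
  obtain ⟨y, hyz, hy⟩ := exists_subset_add_sum_eq hc w z ν' hν'_le
  exact ⟨y, hyz, hν' ▸ hy⟩

theorem gcd_filter_eq_gcd_subtype {α β : Type*} [Fintype α] [DecidableEq α]
    [CommMonoidWithZero β] [NormalizedGCDMonoid β] (P : α → Prop) [DecidablePred P]
    (f : α → β) : (univ.filter P).gcd f = univ.gcd fun i : {i // P i} => f i := by
  calc _ = (univ.image Subtype.val).gcd f := by congr; ext; simp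
    _ = _ := Finset.gcd_image _

section Blocks

variable {n p : ℕ} {a : Fin p → ℕ} {w : Fin n → ℕ} {S : Set (Finset (Fin n))} {M : ℕ}
  {μ : Fin p → ℕ}

theorem mem_block_min {x : Finset (Fin n)} (hx : x ∈ S) :
    x ∈ block a w S (fun _ => M) (fun i => min (lamCoord a w x i) M) :=
  ⟨hx, fun i => ⟨fun h => by simp only at h ⊢; omega, fun h => by simp only at h ⊢; omega⟩⟩

theorem sum_eq_of_mem_block (ha_inj : Function.Injective a) (hw : ∀ j, ∃ i, w j = a i)
    (hμ : μ ≤ fun _ => M) {x : Finset (Fin n)} (hx : x ∈ block a w S (fun _ => M) μ) :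
    ∑ j ∈ x, w j = ∑ i : {i // μ i = M}, lamCoord a w x i * a i +
      ∑ i : {i // ¬μ i = M}, μ i * a i := by
  rw [sum_eq_sum_card_filter_mul ha_inj hw, ← Fintype.sum_subtype_add_sum_subtype (μ · = M)]
  congr 1
  exact Finset.sum_congr rfl fun i _ => by
    rw [← (hx.2 i).1 (lt_of_le_of_ne (hμ i) i.2)]; rfl

theorem le_lamCoord_of_mem_block {x : Finset (Fin n)} (hx : x ∈ block a w S (fun _ => M) μ)
    {i : Fin p} (hi : μ i = M) : M ≤ lamCoord a w x i :=
  hi.symm.trans_le ((hx.2 i).2 hi)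

theorem sum_sub_sum_le_of_mem_block {x z : Finset (Fin n)}
    (hx : x ∈ block a w S (fun _ => M) μ) (hz : z ∈ block a w S (fun _ => M) μ) :
    ∑ i : {i // μ i = M}, lamCoord a w z i * a i - ∑ i : {i // μ i = M}, lamCoord a w x i * a i ≤
      ∑ i : {i // μ i = M}, (lamCoord a w z i - M) * a i := by
  have hx_low : ∑ i : {i // μ i = M}, M * a i ≤ ∑ i : {i // μ i = M}, lamCoord a w x i * a i :=
    Finset.sum_le_sum fun i _ => Nat.mul_le_mul_right _ (le_lamCoord_of_mem_block hx i.2)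
  have hz_split : ∑ i : {i // μ i = M}, (lamCoord a w z i - M) * a i +
      ∑ i : {i // μ i = M}, M * a i = ∑ i : {i // μ i = M}, lamCoord a w z i * a i := by
    rw [← Finset.sum_add_distrib]
    exact Finset.sum_congr rfl fun i _ => by
      rw [← add_mul, Nat.sub_add_cancel (le_lamCoord_of_mem_block hz i.2)]
  omega

theorem exists_eq_sub_mul_of_mem_block (ha_pos : ∀ i, 0 < a i) (ha_inj : Function.Injective a)
    (hw : ∀ j, ∃ i, w j = a i) (hM : ∀ i, a i ≤ M) (hμ : μ ≤ fun _ => M)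
    {xm : Finset (Fin n)} (hxm : xm ∈ block a w S (fun _ => M) μ)
    (hmax : ∀ x ∈ block a w S (fun _ => M) μ, ∑ j ∈ x, w j ≤ ∑ j ∈ xm, w j)
    {x : Finset (Fin n)} (hx : x ∈ block a w S (fun _ => M) μ)
    (hx_out : ∀ y ⊆ xm, ∑ j ∈ y, w j ≠ ∑ j ∈ x, w j) :
    ∃ t ∈ Set.Icc 1 (frob fun i : {i // μ i = M} =>
        a i.1 / (univ.filter fun i => μ i = M).gcd a),
      ∑ j ∈ x, w j = ∑ j ∈ xm, w j - (univ.filter fun i => μ i = M).gcd a * t := by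
  rw [gcd_filter_eq_gcd_subtype]
  set c : {i // μ i = M} → ℕ := fun i => a i
  set g := univ.gcd c
  have hx_sum := sum_eq_of_mem_block ha_inj hw hμ hx
  have hxm_sum := sum_eq_of_mem_block ha_inj hw hμ hxm
  have hle := hmax x hx
  have hne := hx_out xm subset_rfl
  have hdiff_le := sum_sub_sum_le_of_mem_block hx hxm
  obtain ⟨t, ht⟩ : g ∣ ∑ i : {i // μ i = M}, lamCoord a w xm i * a i -
      ∑ i : {i // μ i = M}, lamCoord a w x i * a i := Nat.dvd_sub
    (Finset.dvd_sum fun i _ => (Finset.gcd_dvd (mem_univ i)).mul_left _)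
    (Finset.dvd_sum fun i _ => (Finset.gcd_dvd (mem_univ i)).mul_left _)
  have hg_ne : g ≠ 0 := by rintro hg; rw [hg, zero_mul] at ht; omega
  have ht_ne : t ≠ 0 := by rintro rfl; rw [mul_zero] at ht; omega
  refine ⟨t, ⟨Nat.one_le_iff_ne_zero.mpr ht_ne, ?_⟩, by omega⟩
  obtain ⟨i₀, -, hi₀⟩ : ∃ i ∈ univ, c i ≠ 0 := by
    by_contra! h; exact hg_ne (Finset.gcd_eq_zero_iff.mpr h)
  refine le_csSup (bddAbove_gapSet _ (Finset.gcd_div_eq_one (mem_univ i₀) hi₀)) fun ht_mem => ?_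
  have hgt_mem : g * t ∈ tupleMonoid c := by
    convert mul_mem_tupleMonoid ht_mem g using 2
    funext i
    exact (Nat.mul_div_cancel' (Finset.gcd_dvd (mem_univ i))).symm
  obtain ⟨y, hy, hy_sum⟩ := exists_subset_add_eq_of_mem_tupleMonoid (c := c) (fun i => ha_pos i)
    (ha_inj.comp Subtype.val_injective : Function.Injective c) (fun i => hM i) w
    (fun i => le_lamCoord_of_mem_block hxm i.2) hgt_mem (ht ▸ hdiff_le)
  exact hx_out y hy (by omega)

theorem ncard_image_block_diff_le (ha_pos : ∀ i, 0 < a i) (ha_inj : Function.Injective a)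
    (hw : ∀ j, ∃ i, w j = a i) (hM : ∀ i, a i ≤ M) (hμ : μ ≤ fun _ => M)
    {xm : Finset (Fin n)} (hxm : xm ∈ block a w S (fun _ => M) μ)
    (hmax : ∀ x ∈ block a w S (fun _ => M) μ, ∑ j ∈ x, w j ≤ ∑ j ∈ xm, w j)
    {U : Set (Finset (Fin n))} (hU : {y | y ⊆ xm} ⊆ U) :
    ((fun x : Finset (Fin n) => ∑ j ∈ x, w j) '' block a w S (fun _ => M) μ \
        (fun x : Finset (Fin n) => ∑ j ∈ x, w j) '' U).ncard ≤
      frob fun i : {i // μ i = M} => a i.1 / (univ.filter fun i => μ i = M).gcd a := by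
  set F := frob fun i : {i // μ i = M} => a i.1 / (univ.filter fun i => μ i = M).gcd a
  set g := (univ.filter fun i => μ i = M).gcd a
  have hsub : (fun x : Finset (Fin n) => ∑ j ∈ x, w j) '' block a w S (fun _ => M) μ \
      (fun x : Finset (Fin n) => ∑ j ∈ x, w j) '' U ⊆
      (fun t => ∑ j ∈ xm, w j - g * t) '' Set.Icc 1 F := by
    rintro _ ⟨⟨x, hx, rfl⟩, hx_out⟩
    obtain ⟨t, ht, hxt⟩ := exists_eq_sub_mul_of_mem_block ha_pos ha_inj hw hM hμ hxm hmax hx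
      fun y hy hyx => hx_out ⟨y, hU hy, hyx⟩
    exact ⟨t, ht, hxt.symm⟩
  calc _ ≤ ((fun t => ∑ j ∈ xm, w j - g * t) '' Set.Icc 1 F).ncard :=
        Set.ncard_le_ncard hsub ((Set.finite_Icc 1 F).image _)
    _ ≤ (Set.Icc 1 F).ncard := Set.ncard_image_le (Set.finite_Icc 1 F)
    _ = F := by simp

theorem ncard_image_diff_le_rval (ha_pos : ∀ i, 0 < a i) (ha_inj : Function.Injective a)
    (hw : ∀ j, ∃ i, w j = a i) {xm : (Fin p → ℕ) → Finset (Fin n)}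
    (hxm : ∀ μ ≤ (fun _ => univ.sup a), (block a w S (fun _ => univ.sup a) μ).Nonempty →
      xm μ ∈ block a w S (fun _ => univ.sup a) μ ∧
        ∀ x ∈ block a w S (fun _ => univ.sup a) μ, ∑ j ∈ x, w j ≤ ∑ j ∈ xm μ, w j)
    {U : Set (Finset (Fin n))}
    (hU : ∀ μ ≤ (fun _ => univ.sup a), (block a w S (fun _ => univ.sup a) μ).Nonempty →
      {y | y ⊆ xm μ} ⊆ U) :
    ((fun x : Finset (Fin n) => ∑ j ∈ x, w j) '' S \
        (fun x : Finset (Fin n) => ∑ j ∈ x, w j) '' U).ncard ≤ rval a := by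
  set val := fun x : Finset (Fin n) => ∑ j ∈ x, w j
  have hcover : val '' S \ val '' U ⊆ ⋃ μ : Fin p → Fin (univ.sup a + 1),
      val '' block a w S (fun _ => univ.sup a) (fun i => μ i) \ val '' U := by
    rintro _ ⟨⟨x, hx, rfl⟩, hout⟩
    exact Set.mem_iUnion.mpr ⟨fun i => ⟨min (lamCoord a w x i) (univ.sup a), by omega⟩,
      ⟨x, mem_block_min hx, rfl⟩, hout⟩
  have hfin : (⋃ μ : Fin p → Fin (univ.sup a + 1),
      val '' block a w S (fun _ => univ.sup a) (fun i => μ i) \ val '' U).Finite :=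
    ((Set.toFinite S).image val).subset
      (Set.iUnion_subset fun μ => Set.sdiff_subset.trans (Set.image_mono fun x hx => hx.1))
  refine (Set.ncard_le_ncard hcover hfin).trans
    ((Set.ncard_iUnion_le_of_fintype _).trans (Finset.sum_le_sum fun μ _ => ?_))
  have hμ : (fun i => (μ i : ℕ)) ≤ fun _ => univ.sup a := fun i => Nat.lt_succ_iff.mp (μ i).isLt
  by_cases hne : (block a w S (fun _ => univ.sup a) (fun i => μ i)).Nonempty
  · obtain ⟨hxm_mem, hxm_max⟩ := hxm _ hμ hne
    exact ncard_image_block_diff_le ha_pos ha_inj hw (fun i => le_sup (mem_univ i)) hμ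
      hxm_mem hxm_max (hU _ hμ hne)
  · simp [Set.not_nonempty_iff_eq_empty.mp hne]

end Blocks

theorem ncard_setOf_lt_le_ncard_image_diff {α β γ : Type*} [LinearOrder γ] {S U : Set α}
    (hS : S.Finite) (φ : α → β) (f : β → γ) {x₀ : α} (hmin : ∀ y ∈ U, f (φ x₀) ≤ f (φ y)) :
    {v | ∃ x ∈ S, v = f (φ x) ∧ v < f (φ x₀)}.ncard ≤ (φ '' S \ φ '' U).ncard := by
  have hsub : {v | ∃ x ∈ S, v = f (φ x) ∧ v < f (φ x₀)} ⊆ f '' (φ '' S \ φ '' U) := by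
    rintro _ ⟨x, hx, rfl, hlt⟩
    refine ⟨φ x, ⟨⟨x, hx, rfl⟩, ?_⟩, rfl⟩
    rintro ⟨y, hy, hyx⟩
    exact (hmin y hy).not_gt (hyx ▸ hlt)
  have hfin : (φ '' S \ φ '' U).Finite := (hS.image φ).sdiff
  exact (Set.ncard_le_ncard hsub (hfin.image f)).trans (Set.ncard_image_le hfin)

theorem r_best_solution_general {n p : ℕ} (a : Fin p → ℕ)
    (ha_pos : ∀ i, 0 < a i) (ha_inj : Function.Injective a)
    (S : Set (Finset (Fin n)))
    (hS_indep : ∀ x y : Finset (Fin n), x ⊆ y → y ∈ S → x ∈ S)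
    (w : Fin n → ℕ) (hw : ∀ j, ∃ i, w j = a i)
    (lam : Fin p → ℕ) (hlam : lam = fun _ => Finset.univ.sup a)
    (xm : (Fin p → ℕ) → Finset (Fin n))
    (hxm : ∀ μ ≤ lam, (block a w S lam μ).Nonempty →
      xm μ ∈ block a w S lam μ ∧
        ∀ x ∈ block a w S lam μ, ∑ j ∈ x, w j ≤ ∑ j ∈ xm μ, w j)
    (U : Set (Finset (Fin n)))
    (hU : U = ⋃ μ ∈ {μ : Fin p → ℕ | μ ≤ lam ∧ (block a w S lam μ).Nonempty},
      {x : Finset (Fin n) | x ⊆ xm μ}) :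
    (((fun x : Finset (Fin n) => ∑ j ∈ x, w j) '' S) \
        ((fun x : Finset (Fin n) => ∑ j ∈ x, w j) '' U)).ncard ≤ rval a ∧
    ∀ f : ℤ → ℝ, ∀ xstar ∈ U ∩ S,
      (∀ y ∈ U ∩ S, f ((∑ j ∈ xstar, w j : ℕ) : ℤ) ≤ f ((∑ j ∈ y, w j : ℕ) : ℤ)) →
      {v : ℝ | ∃ x ∈ S, v = f ((∑ j ∈ x, w j : ℕ) : ℤ) ∧
        v < f ((∑ j ∈ xstar, w j : ℕ) : ℤ)}.ncard ≤ rval a := by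
  subst hlam
  have hbad := ncard_image_diff_le_rval (U := U) ha_pos ha_inj hw hxm fun μ hμ hne => by
    rw [hU]
    exact Set.subset_biUnion_of_mem (u := fun μ => {y | y ⊆ xm μ}) ⟨hμ, hne⟩
  have hU_sub_S : U ⊆ S := by
    rw [hU]
    exact Set.iUnion₂_subset fun μ hμ y hy => hS_indep y _ hy (hxm μ hμ.1 hμ.2).1.1
  exact ⟨hbad, fun f xstar _ hmin => (ncard_setOf_lt_le_ncard_image_diff (Set.toFinite S) _
    (fun m : ℕ => f m) fun y hy => hmin y ⟨hy, hU_sub_S hy⟩).trans hbad⟩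

/-- Let `a` be primitive, `S` an independence system,
`w ∈ {a₁,…,a_p}^n`, `λ_i := max(a)` for all `i`. For each `μ ≤ λ` with
`S^λ_μ ≠ ∅` let `x_μ` maximize `w·x` over `S^λ_μ` and `T_μ := {x : x ≤ x_μ}`.
Then `|w·S \ ⋃_μ w·T_μ| ≤ r(a)`, and consequently any `x*` minimizing `f(w·x)`
over `(⋃_μ T_μ) ∩ S` is an `r(a)`-best solution to `min{f(w·x) : x ∈ S}`,
for any `f : ℤ → ℝ`. -/
theorem r_best_solution {n p : ℕ} (a : Fin p → ℕ)
    (ha_pos : ∀ i, 0 < a i) (ha_inj : Function.Injective a)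
    (ha_gcd : Finset.univ.gcd a = 1)
    (S : Set (Finset (Fin n))) (hS_ne : S.Nonempty)
    (hS_indep : ∀ x y : Finset (Fin n), x ⊆ y → y ∈ S → x ∈ S)
    (w : Fin n → ℕ) (hw : ∀ j, ∃ i, w j = a i)
    (lam : Fin p → ℕ) (hlam : lam = fun _ => Finset.univ.sup a)
    (xm : (Fin p → ℕ) → Finset (Fin n))
    (hxm : ∀ μ ≤ lam, (block a w S lam μ).Nonempty →
      xm μ ∈ block a w S lam μ ∧
        ∀ x ∈ block a w S lam μ, ∑ j ∈ x, w j ≤ ∑ j ∈ xm μ, w j)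
    (U : Set (Finset (Fin n)))
    (hU : U = ⋃ μ ∈ {μ : Fin p → ℕ | μ ≤ lam ∧ (block a w S lam μ).Nonempty},
      {x : Finset (Fin n) | x ⊆ xm μ}) :
    (((fun x : Finset (Fin n) => ∑ j ∈ x, w j) '' S) \
        ((fun x : Finset (Fin n) => ∑ j ∈ x, w j) '' U)).ncard ≤ rval a ∧
    ∀ f : ℤ → ℝ, ∀ xstar ∈ U ∩ S,
      (∀ y ∈ U ∩ S, f ((∑ j ∈ xstar, w j : ℕ) : ℤ) ≤ f ((∑ j ∈ y, w j : ℕ) : ℤ)) →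
      {v : ℝ | ∃ x ∈ S, v = f ((∑ j ∈ x, w j : ℕ) : ℤ) ∧
        v < f ((∑ j ∈ xstar, w j : ℕ) : ℤ)}.ncard ≤ rval a :=
  r_best_solution_general a ha_pos ha_inj S hS_indep w hw lam hlam xm hxm U hU
end

section
/- Let m ≥ 2, n = 4m, I = {1,…,2m}, J = {2m+1,…,4m}. For i ∈ {0,1,2} let T_i := {1_A + 1_B : A ⊆ I, |A| = m+i, B ⊆ J, |B| = m−i} ⊆ {0,1}^n, and let S := {z ∈ {0,1}^n : z ≤ x for some x ∈ T_0 ∪ T_2}. Then for every positive integer p < C(2m, m+1) and all vectors c^1,…,c^p ∈ ℤ^n, there exists y ∈ T_1 such that c^i·y ≤ max{c^i·x : x ∈ S} for every i = 1,…,p. -/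
/-- 0/1 points `x ∈ {0,1}^n` with `n = 4m` are encoded as subsets of the ground
set `Fin (4m)` (their supports); `1_A + 1_B` with `A, B` disjoint is `A ∪ B`,
`z ≤ x` is `z ⊆ x`, and `c·x = ∑_{j ∈ x} c_j`. Here
`I = {1,…,2m}` is encoded as `{j : (j : ℕ) < 2m}` and `J = {2m+1,…,4m}` as
`{j : 2m ≤ (j : ℕ)}`. `T_i := {1_A + 1_B : A ⊆ I, |A| = m+i, B ⊆ J, |B| = m−i}`. -/
def Tset (m i : ℕ) : Set (Finset (Fin (4 * m))) :=
  {x | ∃ A B : Finset (Fin (4 * m)),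
    A ⊆ Finset.univ.filter (fun j => (j : ℕ) < 2 * m) ∧
    B ⊆ Finset.univ.filter (fun j => 2 * m ≤ (j : ℕ)) ∧
    A.card = m + i ∧ B.card = m - i ∧ x = A ∪ B}

/-- The independence system generated by `T₀ ∪ T₂`. -/
def Sys (m : ℕ) : Set (Finset (Fin (4 * m))) :=
  {z | ∃ x ∈ Tset m 0 ∪ Tset m 2, z ⊆ x}

/-!
Fix a cost vector `c` and call `y = A ∪ B ∈ T₁` *swap-decreasing* if every exchange of one element
of `A` for one of `J \ B`, and every exchange of one element of `B` for one of `I \ A`, strictly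
lowers the cost. If `y` is not swap-decreasing, one such exchange yields a point of `T₀` or `T₂`
(hence of `S`) at least as expensive as `y`. Two swap-decreasing pairs `(A, B)`, `(A', B')` with
`A ≠ A'` must have `B = B'`: an element `a' ∈ A' \ A` and an element `b ∈ B \ B'` would satisfy both
`c a' < c b` and `c b < c a'`. So the swap-decreasing pairs of `c` all share the `A`-part or the
`B`-part of one fixed pair, and as `p < C(2m, m+1) = C(2m, m-1)` we can choose `A` and `B`
different from all `p` fixed `A`-parts and `B`-parts; then `A ∪ B` is swap-decreasing for no `cⁱ`.
-/

open Finset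

section SwapDecreasing

variable {α β : Type*} [DecidableEq α]

def SwapDecreasing [LinearOrder β] (c : α → β) (I J A B : Finset α) : Prop :=
  (∀ a ∈ A, ∀ b ∈ J \ B, c b < c a) ∧ (∀ b ∈ B, ∀ a ∈ I \ A, c a < c b)

namespace SwapDecreasing

variable [LinearOrder β] {c : α → β} {I J A B A' B' : Finset α}

theorem subset_of_not_subset (h : SwapDecreasing c I J A B) (h' : SwapDecreasing c I J A' B')
    (hA' : A' ⊆ I) (hB : B ⊆ J) (hAA' : ¬A' ⊆ A) : B ⊆ B' := by
  obtain ⟨a', ha'A', ha'A⟩ := not_subset.1 hAA'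
  intro b hb
  by_contra hbB'
  exact lt_asymm (h.2 b hb a' (mem_sdiff.2 ⟨hA' ha'A', ha'A⟩))
    (h'.1 a' ha'A' b (mem_sdiff.2 ⟨hB hb, hbB'⟩))

theorem eq_or_eq (h : SwapDecreasing c I J A B) (h' : SwapDecreasing c I J A' B')
    (hA' : A' ⊆ I) (hB : B ⊆ J) (hcardA : #A ≤ #A') (hcardB : #B' ≤ #B) : A = A' ∨ B = B' := by
  by_cases hAA' : A' ⊆ A
  · exact .inl (eq_of_subset_of_card_le hAA' hcardA).symm
  · exact .inr (eq_of_subset_of_card_le (h.subset_of_not_subset h' hA' hB hAA') hcardB)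

end SwapDecreasing

theorem exists_swapDecreasing_cover [LinearOrder β] (c : α → β) (I J : Finset α) (k l : ℕ) :
    ∃ A₀ B₀ : Finset α, ∀ A B, A ⊆ I → B ⊆ J → #A = k → #B = l →
      SwapDecreasing c I J A B → A = A₀ ∨ B = B₀ := by
  by_cases hex : ∃ A₀ B₀, A₀ ⊆ I ∧ B₀ ⊆ J ∧ #A₀ = k ∧ #B₀ = l ∧ SwapDecreasing c I J A₀ B₀
  · obtain ⟨A₀, B₀, hA₀, -, hkA₀, hlB₀, h₀⟩ := hex
    exact ⟨A₀, B₀, fun A B _ hB hkA hlB h => h.eq_or_eq h₀ hA₀ hB (by omega) (by omega)⟩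
  · exact ⟨∅, ∅, fun A B hA hB hkA hlB h => absurd ⟨A, B, hA, hB, hkA, hlB, h⟩ hex⟩

theorem erase_union_insert_eq {a b : α} {A B : Finset α} (ha : a ∉ B) :
    A.erase a ∪ insert b B = insert b ((A ∪ B).erase a) := by
  ext x
  simp only [mem_union, mem_erase, mem_insert]
  grind

theorem sum_le_sum_insert_erase [AddCommMonoid β] [PartialOrder β] [IsOrderedAddMonoid β]
    {c : α → β} {y : Finset α} {a b : α} (ha : a ∈ y) (hb : b ∉ y) (hab : c a ≤ c b) :
    ∑ j ∈ y, c j ≤ ∑ j ∈ insert b (y.erase a), c j := by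
  rw [sum_insert fun hb' => hb (mem_of_mem_erase hb'), ← sum_erase_add y c ha, add_comm]
  gcongr

theorem exists_swap_sum_ge [AddCommMonoid β] [LinearOrder β] [IsOrderedAddMonoid β]
    {c : α → β} {I J A B : Finset α} (hIJ : Disjoint I J) (hA : A ⊆ I) (hB : B ⊆ J)
    (h : ¬SwapDecreasing c I J A B) :
    (∃ a ∈ A, ∃ b ∈ J \ B, ∑ j ∈ A ∪ B, c j ≤ ∑ j ∈ A.erase a ∪ insert b B, c j) ∨
      ∃ b ∈ B, ∃ a ∈ I \ A, ∑ j ∈ A ∪ B, c j ≤ ∑ j ∈ insert a A ∪ B.erase b, c j := by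
  have hAB : Disjoint A B := hIJ.mono hA hB
  simp only [SwapDecreasing, not_and_or, not_forall, not_lt, exists_prop] at h
  rcases h with ⟨a, ha, b, hb, hab⟩ | ⟨b, hb, a, ha, hba⟩
  · refine .inl ⟨a, ha, b, hb, ?_⟩
    rw [erase_union_insert_eq (disjoint_left.1 hAB ha)]
    refine sum_le_sum_insert_erase (mem_union_left B ha) ?_ hab
    rw [mem_sdiff] at hb
    simp only [mem_union, not_or]
    exact ⟨fun hbA => disjoint_left.1 hIJ (hA hbA) hb.1, hb.2⟩
  · refine .inr ⟨b, hb, a, ha, ?_⟩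
    rw [union_comm A B, union_comm (insert a A), erase_union_insert_eq (disjoint_right.1 hAB hb)]
    refine sum_le_sum_insert_erase (mem_union_left A hb) ?_ hba
    rw [mem_sdiff] at ha
    simp only [mem_union, not_or]
    exact ⟨fun haB => disjoint_left.1 hIJ ha.1 (hB haB), ha.2⟩

end SwapDecreasing

theorem exists_subset_card_eq_forall_ne {α ι : Type*} [Fintype ι] (s : Finset α) (k : ℕ)
    (f : ι → Finset α) (h : Fintype.card ι < (#s).choose k) :
    ∃ A ⊆ s, #A = k ∧ ∀ i, f i ≠ A := by
  classical
  have hcard : #(univ.image f) < #(s.powersetCard k) :=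
    card_powersetCard k s ▸ (card_image_le.trans_eq card_univ).trans_lt h
  obtain ⟨A, hAs, hAf⟩ := exists_mem_notMem_of_card_lt_card hcard
  rw [mem_powersetCard] at hAs
  exact ⟨A, hAs.1, hAs.2, fun i hi => hAf (mem_image.2 ⟨i, mem_univ i, hi⟩)⟩

theorem oracle_lower_bound_general (m : ℕ) (p : ℕ)
    (hp : p < Nat.choose (2 * m) (m + 1)) (c : Fin p → Fin (4 * m) → ℤ) :
    ∃ y ∈ Tset m 1, ∀ i : Fin p, ∃ x ∈ Sys m, ∑ j ∈ y, c i j ≤ ∑ j ∈ x, c i j := by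
  have hm : m + 1 ≤ 2 * m := by
    by_contra! h
    simp [Nat.choose_eq_zero_of_lt h] at hp
  set I : Finset (Fin (4 * m)) := univ.filter fun j => (j : ℕ) < 2 * m
  set J : Finset (Fin (4 * m)) := univ.filter fun j => 2 * m ≤ (j : ℕ)
  have hIJ : Disjoint I J := disjoint_filter.2 fun _ _ => Nat.not_le.2
  have hI : #I = 2 * m := by rw [Fin.card_filter_val_lt]; omega
  have hJ : #J = 2 * m := by
    have := card_filter_add_card_filter_not (s := univ) fun j : Fin (4 * m) => (j : ℕ) < 2 * m
    simp only [not_lt, card_univ, Fintype.card_fin] at this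
    change #I + #J = 4 * m at this
    omega
  choose A₀ B₀ hcover using fun i => exists_swapDecreasing_cover (c i) I J (m + 1) (m - 1)
  obtain ⟨A, hAI, hA, hAA₀⟩ := exists_subset_card_eq_forall_ne I (m + 1) A₀ (by simpa [hI])
  obtain ⟨B, hBJ, hB, hBB₀⟩ := exists_subset_card_eq_forall_ne J (m - 1) B₀ <| by
    rwa [Fintype.card_fin, hJ, show m - 1 = 2 * m - (m + 1) by omega, Nat.choose_symm hm]
  refine ⟨A ∪ B, ⟨A, B, hAI, hBJ, hA, hB, rfl⟩, fun i => ?_⟩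
  have hnot : ¬SwapDecreasing (c i) I J A B := fun h =>
    (hcover i A B hAI hBJ hA hB h).elim (hAA₀ i ·.symm) (hBB₀ i ·.symm)
  rcases exists_swap_sum_ge hIJ hAI hBJ hnot with ⟨a, ha, b, hb, hsum⟩ | ⟨b, hb, a, ha, hsum⟩
  · rw [mem_sdiff] at hb
    refine ⟨_, ⟨_, .inl ⟨A.erase a, insert b B, (erase_subset a A).trans hAI,
      insert_subset hb.1 hBJ, ?_, ?_, rfl⟩, subset_rfl⟩, hsum⟩
    · rw [card_erase_of_mem ha]; omega
    · rw [card_insert_of_notMem hb.2]; omega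
  · rw [mem_sdiff] at ha
    refine ⟨_, ⟨_, .inr ⟨insert a A, B.erase b, insert_subset ha.1 hAI,
      (erase_subset b B).trans hBJ, ?_, ?_, rfl⟩, subset_rfl⟩, hsum⟩
    · rw [card_insert_of_notMem ha.2]; omega
    · rw [card_erase_of_mem hb]; omega

/-- For every `m ≥ 2` and every `p` with `0 < p < C(2m, m+1)`
and all vectors `c¹,…,c^p ∈ ℤ^n`, there is `y ∈ T₁` such that
`cⁱ·y ≤ max{cⁱ·x : x ∈ S}` for every `i = 1,…,p`. -/
theorem oracle_lower_bound (m : ℕ) (hm : 2 ≤ m) (p : ℕ) (hp0 : 0 < p)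
    (hp : p < Nat.choose (2 * m) (m + 1)) (c : Fin p → Fin (4 * m) → ℤ) :
    ∃ y ∈ Tset m 1, ∀ i : Fin p, ∃ x ∈ Sys m, ∑ j ∈ y, c i j ≤ ∑ j ∈ x, c i j :=
  oracle_lower_bound_general m p hp c
end

section
/- Let m ≥ 2, n = 4m, I = {1,…,2m}, J = {2m+1,…,4m}. For i ∈ {0,1,2} let T_i := {1_A + 1_B : A ⊆ I, |A| = m+i, B ⊆ J, |B| = m−i} ⊆ {0,1}^n, and let S := {z ∈ {0,1}^n : z ≤ x for some x ∈ T_0 ∪ T_2}. For c ∈ ℤ^n define Y(c) := {y ∈ T_1 : c·y > max{c·x : x ∈ S}}. Then |Y(c)| ≤ C(2m, m−1) for every c ∈ ℤ^n. -/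
/-- `Y(c) := {y ∈ T₁ : c·y > max{c·x : x ∈ S}}`. -/
def Yset (m : ℕ) (c : Fin (4 * m) → ℤ) : Set (Finset (Fin (4 * m))) :=
  {y ∈ Tset m 1 | ∀ x ∈ Sys m, ∑ j ∈ x, c j < ∑ j ∈ y, c j}

open Finset

section

variable {α : Type*}

theorem Set.forall_eq_or_forall_eq_of_forall_eq_or_eq {β γ : Type*} {s : Set α}
    {f : α → β} {g : α → γ} (h : ∀ x ∈ s, ∀ y ∈ s, f x = f y ∨ g x = g y) :
    (∀ x ∈ s, ∀ y ∈ s, f x = f y) ∨ ∀ x ∈ s, ∀ y ∈ s, g x = g y := by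
  refine or_iff_not_imp_left.2 fun hf => ?_
  push Not at hf
  obtain ⟨p, hp, q, hq, hpq⟩ := hf
  have hg : ∀ r ∈ s, g r = g p := fun r hr => by
    rcases h r hr p hp with hrp | hrp
    · exact ((h r hr q hq).resolve_left (hrp ▸ hpq)).trans ((h p hp q hq).resolve_left hpq).symm
    · exact hrp
  exact fun x hx y hy => (hg x hx).trans (hg y hy).symm

theorem Finset.exists_mem_notMem_of_ne_of_card_le {s t : Finset α} (hne : s ≠ t) (h : #t ≤ #s) :
    ∃ a ∈ s, a ∉ t :=
  not_subset.1 fun hst => hne (eq_of_subset_of_card_le hst h)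

theorem Set.ncard_le_choose_of_injOn {s : Set (Finset α)} {t : Finset α} {k : ℕ}
    (f : Finset α → Finset α) (hf : ∀ y ∈ s, f y ⊆ t ∧ #(f y) = k) (hinj : s.InjOn f) :
    s.ncard ≤ (#t).choose k := by
  rw [← card_powersetCard, ← Set.ncard_coe_finset]
  exact Set.ncard_le_ncard_of_injOn f (fun y hy => mem_powersetCard.2 (hf y hy)) hinj

variable [DecidableEq α] (c : α → ℤ) {y t : Finset α} {a b : α}

theorem Finset.sum_insert_erase_eq (ha : a ∉ y) (hb : b ∈ y) :
    ∑ j ∈ insert a (y.erase b), c j = ∑ j ∈ y, c j + c a - c b := by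
  rw [sum_insert (fun h => ha (mem_of_mem_erase h)), sum_erase_eq_sub hb]
  ring

theorem Finset.card_insert_erase_inter_of_mem (ha : a ∉ y) (hat : a ∈ t) (hbt : b ∉ t) :
    #(insert a (y.erase b) ∩ t) = #(y ∩ t) + 1 := by
  rw [insert_inter_of_mem hat, erase_inter, erase_eq_of_notMem (fun h => hbt (mem_inter.1 h).2),
    card_insert_of_notMem (fun h => ha (mem_inter.1 h).1)]

theorem Finset.card_insert_erase_inter_of_notMem (hb : b ∈ y) (hat : a ∉ t) (hbt : b ∈ t) :
    #(insert a (y.erase b) ∩ t) = #(y ∩ t) - 1 := by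
  rw [insert_inter_of_notMem hat, erase_inter, card_erase_of_mem (mem_inter.2 ⟨hb, hbt⟩)]

end

def Iset (m : ℕ) : Finset (Fin (4 * m)) := univ.filter fun j => (j : ℕ) < 2 * m

def Jset (m : ℕ) : Finset (Fin (4 * m)) := univ.filter fun j => 2 * m ≤ (j : ℕ)

variable {m : ℕ}

theorem card_Iset (m : ℕ) : #(Iset m) = 2 * m := by
  rw [Iset, Fin.card_filter_val_lt]
  omega

theorem compl_Iset (m : ℕ) : (Iset m)ᶜ = Jset m := by
  ext j
  simp [Iset, Jset]

theorem card_Jset (m : ℕ) : #(Jset m) = 2 * m := by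
  rw [← compl_Iset, card_compl, card_Iset, Fintype.card_fin]
  omega

theorem inter_Iset_union_inter_Jset (y : Finset (Fin (4 * m))) : y ∩ Iset m ∪ y ∩ Jset m = y := by
  rw [← inter_union_distrib_left, ← compl_Iset, union_compl, inter_univ]

theorem union_inter_Iset {A B : Finset (Fin (4 * m))} (hA : A ⊆ Iset m) (hB : B ⊆ Jset m) :
    (A ∪ B) ∩ Iset m = A := by
  have hBI : Disjoint B (Iset m) := (compl_Iset m ▸ disjoint_compl_left).mono_left hB
  rw [union_inter_distrib_right, inter_eq_left.2 hA, disjoint_iff_inter_eq_empty.1 hBI, union_empty]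

theorem union_inter_Jset {A B : Finset (Fin (4 * m))} (hA : A ⊆ Iset m) (hB : B ⊆ Jset m) :
    (A ∪ B) ∩ Jset m = B := by
  have hAJ : Disjoint A (Jset m) := (compl_Iset m ▸ disjoint_compl_right).mono_left hA
  rw [union_inter_distrib_right, inter_eq_left.2 hB, disjoint_iff_inter_eq_empty.1 hAJ, empty_union]

theorem mem_Tset_iff {i : ℕ} {x : Finset (Fin (4 * m))} :
    x ∈ Tset m i ↔ #(x ∩ Iset m) = m + i ∧ #(x ∩ Jset m) = m - i := by
  constructor
  · rintro ⟨A, B, hA, hB, hAc, hBc, rfl⟩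
    rw [union_inter_Iset hA hB, union_inter_Jset hA hB]
    exact ⟨hAc, hBc⟩
  · rintro ⟨hI, hJ⟩
    exact ⟨_, _, inter_subset_right, inter_subset_right, hI, hJ, (inter_Iset_union_inter_Jset x).symm⟩

variable {c : Fin (4 * m) → ℤ} {y y' : Finset (Fin (4 * m))}

theorem eq_of_inter_Iset_eq_of_inter_Jset_eq (hI : y ∩ Iset m = y' ∩ Iset m)
    (hJ : y ∩ Jset m = y' ∩ Jset m) : y = y' := by
  rw [← inter_Iset_union_inter_Jset y, ← inter_Iset_union_inter_Jset y', hI, hJ]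

theorem inter_Jset_subset_of_mem_Yset (hy : y ∈ Yset m c) (hy' : y' ∈ Yset m c) {a : Fin (4 * m)}
    (haI : a ∈ Iset m) (ha : a ∈ y') (ha' : a ∉ y) : y ∩ Jset m ⊆ y' := by
  intro b hb
  by_contra hb'
  obtain ⟨hb, hbJ⟩ := mem_inter.1 hb
  obtain ⟨hyT, hy_gt⟩ := hy
  obtain ⟨hy'T, hy'_gt⟩ := hy'
  rw [mem_Tset_iff] at hyT hy'T
  have haJ : a ∉ Jset m := compl_Iset m ▸ notMem_compl.2 haI
  have hbI : b ∉ Iset m := mem_compl.1 (compl_Iset m ▸ hbJ)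
  have hm : 1 ≤ m - 1 := hyT.2 ▸ card_pos.2 ⟨b, mem_inter.2 ⟨hb, hbJ⟩⟩
  have hT₂ : insert a (y.erase b) ∈ Tset m 2 := by
    rw [mem_Tset_iff, card_insert_erase_inter_of_mem ha' haI hbI,
      card_insert_erase_inter_of_notMem hb haJ hbJ, hyT.1, hyT.2]
    omega
  have hT₀ : insert b (y'.erase a) ∈ Tset m 0 := by
    rw [mem_Tset_iff, card_insert_erase_inter_of_mem hb' hbJ haJ,
      card_insert_erase_inter_of_notMem ha hbI haI, hy'T.1, hy'T.2]
    omega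
  have h₂ := hy_gt _ ⟨_, Or.inr hT₂, subset_rfl⟩
  have h₀ := hy'_gt _ ⟨_, Or.inl hT₀, subset_rfl⟩
  rw [sum_insert_erase_eq c ha' hb] at h₂
  rw [sum_insert_erase_eq c hb' ha] at h₀
  linarith

theorem inter_Iset_eq_or_inter_Jset_eq_of_mem_Yset (hy : y ∈ Yset m c) (hy' : y' ∈ Yset m c) :
    y ∩ Iset m = y' ∩ Iset m ∨ y ∩ Jset m = y' ∩ Jset m := by
  refine or_iff_not_imp_left.2 fun hI => ?_
  have hyT := mem_Tset_iff.1 hy.1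
  have hy'T := mem_Tset_iff.1 hy'.1
  obtain ⟨a, ha, ha'⟩ := exists_mem_notMem_of_ne_of_card_le (Ne.symm hI) (by rw [hyT.1, hy'T.1])
  obtain ⟨ha, haI⟩ := mem_inter.1 ha
  have hJ : y ∩ Jset m ⊆ y' ∩ Jset m :=
    subset_inter (inter_Jset_subset_of_mem_Yset hy hy' haI ha fun h => ha' (mem_inter.2 ⟨h, haI⟩))
      inter_subset_right
  exact eq_of_subset_of_card_le hJ (by rw [hyT.2, hy'T.2])

theorem Yset_card_le_general (m : ℕ) (c : Fin (4 * m) → ℤ) :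
    (Yset m c).ncard ≤ Nat.choose (2 * m) (m - 1) := by
  have hT (y) (hy : y ∈ Yset m c) := mem_Tset_iff.1 hy.1
  rcases Set.forall_eq_or_forall_eq_of_forall_eq_or_eq
    (fun y hy y' hy' => inter_Iset_eq_or_inter_Jset_eq_of_mem_Yset (c := c) hy hy') with hI | hJ
  · calc (Yset m c).ncard ≤ (#(Jset m)).choose (m - 1) :=
          Set.ncard_le_choose_of_injOn (· ∩ Jset m) (fun y hy => ⟨inter_subset_right, (hT y hy).2⟩)
            fun y hy y' hy' => eq_of_inter_Iset_eq_of_inter_Jset_eq (hI y hy y' hy')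
      _ = (2 * m).choose (m - 1) := by rw [card_Jset]
  · calc (Yset m c).ncard ≤ (#(Iset m)).choose (m + 1) :=
          Set.ncard_le_choose_of_injOn (· ∩ Iset m) (fun y hy => ⟨inter_subset_right, (hT y hy).1⟩)
            fun y hy y' hy' hI => eq_of_inter_Iset_eq_of_inter_Jset_eq hI (hJ y hy y' hy')
      _ ≤ (2 * m).choose (m - 1) := by
          rw [card_Iset]
          rcases m with _ | m
          · simp
          · exact (Nat.choose_symm_of_eq_add (by omega)).le

/-- For every `m ≥ 2` and every `c ∈ ℤ^n`,
`|Y(c)| ≤ C(2m, m−1)`. -/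
theorem Yset_card_le (m : ℕ) (hm : 2 ≤ m) (c : Fin (4 * m) → ℤ) :
    (Yset m c).ncard ≤ Nat.choose (2 * m) (m - 1) :=
  Yset_card_le_general m c
end

section
/- Let a_j, a_k, a_l be positive integers with gcd(a_j, a_k, a_l) = 1. Then there exist an integer γ with 0 ≤ γ ≤ ⌈a_j/2⌉ and nonnegative integers x_j, x_l, not both zero, such that a_j·x_j = γ·a_k + a_l·x_l, x_l ≤ ⌊a_j/2⌋, and a_j·x_j ≤ max(a_j, a_k, a_l)·a_j (hence x_j ≤ max(a_j, a_k, a_l)). -/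
/-!
Pigeonhole: as `t` runs over the `a_j + 1` integers in `[-⌈a_j/2⌉, ⌊a_j/2⌋]`, two of the
residues `a_l t⁺ - a_k t⁻ mod a_j` coincide. Subtracting the two encodings gives `(γ, x_l) ≠ 0`
within the bounds with `a_j ∣ γ a_k + a_l x_l`, and `x_j` is the quotient, bounded because
`γ a_k + a_l x_l ≤ (⌈a_j/2⌉ + ⌊a_j/2⌋) max(a_j, a_k, a_l)`.
-/

theorem exists_dvd_mul_add_mul_of_le_add {n : ℕ} (hn : 0 < n) (a b p q : ℕ) (h : n ≤ p + q) :
    ∃ γ x : ℕ, γ ≤ p ∧ x ≤ q ∧ 0 < γ + x ∧ n ∣ γ * a + b * x := by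
  let w : ℤ → ℤ := fun t => b * t.toNat - a * (-t).toNat
  obtain ⟨s, hs, t, ht, hst, heq⟩ := Finset.exists_ne_map_eq_of_card_lt_of_maps_to
    (s := Finset.Icc (-(p : ℤ)) q) (t := Finset.Ico (0 : ℤ) n) (f := fun t => w t % n)
    (by simp only [Int.card_Icc, Int.card_Ico]; omega)
    (fun t _ => by
      simp only [Finset.coe_Ico, Set.mem_Ico]
      exact ⟨Int.emod_nonneg _ (by omega), Int.emod_lt_of_pos _ (by omega)⟩)
  wlog hlt : s < t generalizing s t
  · exact this t ht s hs hst.symm heq.symm (by omega)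
  simp only [Finset.mem_Icc] at hs ht
  have hγ : (-t).toNat ≤ (-s).toNat := by omega
  have hx : s.toNat ≤ t.toNat := by omega
  refine ⟨(-s).toNat - (-t).toNat, t.toNat - s.toNat, by omega, by omega, by omega, ?_⟩
  rw [← Int.natCast_dvd_natCast]
  convert (Int.ModEq.dvd heq : (n : ℤ) ∣ w t - w s) using 1
  push_cast [Nat.cast_sub hγ, Nat.cast_sub hx]
  ring

theorem claim_two_general (aj ak al : ℕ) (haj : 0 < aj) (hak : 0 < ak) :
    ∃ γ xj xl : ℕ, γ ≤ (aj + 1) / 2 ∧ ¬(xj = 0 ∧ xl = 0) ∧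
      aj * xj = γ * ak + al * xl ∧ xl ≤ aj / 2 ∧
      aj * xj ≤ max aj (max ak al) * aj ∧ xj ≤ max aj (max ak al) := by
  set M := max aj (max ak al)
  obtain ⟨γ, xl, hγ, hxl, hpos, xj, hxj⟩ :=
    exists_dvd_mul_add_mul_of_le_add haj ak al ((aj + 1) / 2) (aj / 2) (by omega)
  have hbound : aj * xj ≤ M * aj := calc
    aj * xj = γ * ak + al * xl := hxj.symm
    _ ≤ (aj + 1) / 2 * M + M * (aj / 2) := by gcongr <;> simp [M]
    _ = M * aj := by rw [mul_comm, ← mul_add]; congr 1; omega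
  refine ⟨γ, xj, xl, hγ, ?_, hxj.symm, hxl, hbound, Nat.le_of_mul_le_mul_left (by linarith) haj⟩
  rintro ⟨rfl, rfl⟩
  simp only [mul_zero, add_zero, mul_eq_zero, hak.ne', or_false] at hxj
  omega

/-- **Claim 2.** For positive integers `a_j, a_k, a_l` with
`gcd(a_j, a_k, a_l) = 1`, there exist `γ ≤ ⌈a_j/2⌉` (i.e. `γ ≤ (a_j+1)/2` with
`ℕ`-division) and nonnegative integers `x_j, x_l`, not both zero, with
`a_j·x_j = γ·a_k + a_l·x_l`, `x_l ≤ ⌊a_j/2⌋`, and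
`a_j·x_j ≤ max(a_j,a_k,a_l)·a_j` (hence `x_j ≤ max(a_j,a_k,a_l)`). -/
theorem claim_two (aj ak al : ℕ) (haj : 0 < aj) (hak : 0 < ak) (hal : 0 < al)
    (hgcd : Nat.gcd aj (Nat.gcd ak al) = 1) :
    ∃ γ xj xl : ℕ, γ ≤ (aj + 1) / 2 ∧ ¬(xj = 0 ∧ xl = 0) ∧
      aj * xj = γ * ak + al * xl ∧ xl ≤ aj / 2 ∧
      aj * xj ≤ max aj (max ak al) * aj ∧ xj ≤ max aj (max ak al) :=
  claim_two_general aj ak al haj hak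
end
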